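/- arXiv:2011.14303 — 11 statements merged into one kernel-verified Lean document; each statement's English description precedes it below -/
import Mathlib

section
/- Let A = (Q, Σ, q_I, Δ, F) be a probabilistic automaton, and let Ξ be the operator Ξ(G)(x) = x ⊔ ⨆_{c∈Σ} G(f_c(x)) on the complete lattice L of monotone self-maps of Q → [0,1]. Then the value of A equals the least fixed point of Ξ applied to the indicator of F and evaluated at the initial state: val(A) = lfp(Ξ)(χ_F)(q_I). -/
open Finset

instance : Fact ((0:ℝ) ≤ 1) := ⟨zero_le_one⟩

/-- The acceptance probability of a probabilistic automaton with transition
probabilities `Δ` and accepting states `F`, from state `q`, on the word `w`. -/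
noncomputable def paAccept {Q A : Type*} [Fintype Q] [DecidableEq Q]
    (Δ : Q → A → Q → ℝ) (F : Finset Q) (q : Q) (w : List A) : ℝ :=
  ∑ path : Fin w.length → Q,
    (if (Fin.cons q path : Fin (w.length + 1) → Q) (Fin.last w.length) ∈ F
        then (1 : ℝ) else 0) *
      ∏ i : Fin w.length,
        Δ ((Fin.cons q path : Fin (w.length + 1) → Q) i.castSucc) (w.get i)
          ((Fin.cons q path : Fin (w.length + 1) → Q) i.succ)

theorem paAccept_nil {Q A : Type*} [Fintype Q] [DecidableEq Q]
    (Δ : Q → A → Q → ℝ) (F : Finset Q) (q : Q) :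
    paAccept Δ F q ([] : List A) = if q ∈ F then 1 else 0 := by
  simp [paAccept]

theorem paAccept_cons {Q A : Type*} [Fintype Q] [DecidableEq Q]
    (Δ : Q → A → Q → ℝ) (F : Finset Q) (q : Q) (c : A) (w : List A) :
    paAccept Δ F q (c :: w) = ∑ q', Δ q c q' * paAccept Δ F q' w := by
  unfold paAccept
  simp only [List.length_cons]
  rw [← Equiv.sum_comp (Fin.consEquiv (fun _ : Fin (w.length + 1) => Q))]
  rw [Fintype.sum_prod_type]
  refine Finset.sum_congr rfl fun q' _ => ?_
  rw [Finset.mul_sum]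
  refine Finset.sum_congr rfl fun t _ => ?_
  have he : (Fin.consEquiv (fun _ : Fin (w.length + 1) => Q)) (q', t) = Fin.cons q' t := rfl
  rw [he]
  rw [Fin.prod_univ_succ]
  have h0 : (Fin.cons q (Fin.cons q' t) : Fin (w.length + 1 + 1) → Q) ((0 : Fin (w.length+1)).castSucc) = q := by
    simp
  have h1 : (Fin.cons q (Fin.cons q' t) : Fin (w.length + 1 + 1) → Q) ((0 : Fin (w.length+1)).succ) = q' := by
    rw [Fin.cons_succ]; simp
  have hlast : (Fin.cons q (Fin.cons q' t) : Fin (w.length + 1 + 1) → Q) (Fin.last (w.length+1))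
      = (Fin.cons q' t : Fin (w.length + 1) → Q) (Fin.last w.length) := by
    rw [← Fin.succ_last, Fin.cons_succ]
  rw [h0, h1]
  simp only [hlast]
  have hrest : ∀ i : Fin w.length,
      Δ ((Fin.cons q (Fin.cons q' t) : Fin (w.length + 1 + 1) → Q) (i.succ).castSucc)
        ((c :: w).get i.succ)
        ((Fin.cons q (Fin.cons q' t) : Fin (w.length + 1 + 1) → Q) (i.succ).succ)
      = Δ ((Fin.cons q' t : Fin (w.length + 1) → Q) i.castSucc) (w.get i)
          ((Fin.cons q' t : Fin (w.length + 1) → Q) i.succ) := by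
    intro i
    rw [← Fin.succ_castSucc, Fin.cons_succ, Fin.cons_succ]
    rfl
  simp only [hrest]
  have : ((c :: w).get (0 : Fin (w.length+1))) = c := rfl
  rw [this]
  ring

theorem paAccept_nonneg' {Q A : Type*} [Fintype Q] [DecidableEq Q]
    (Δ : Q → A → Q → ℝ) (F : Finset Q) (hΔ0 : ∀ q c q', 0 ≤ Δ q c q')
    (w : List A) (q : Q) : 0 ≤ paAccept Δ F q w := by
  induction w generalizing q with
  | nil => rw [paAccept_nil]; positivity
  | cons c w ih =>
    rw [paAccept_cons]
    exact Finset.sum_nonneg fun q' _ => mul_nonneg (hΔ0 q c q') (ih q')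

theorem paAccept_le_one' {Q A : Type*} [Fintype Q] [DecidableEq Q]
    (Δ : Q → A → Q → ℝ) (F : Finset Q) (hΔ0 : ∀ q c q', 0 ≤ Δ q c q')
    (hΔsum : ∀ q c, ∑ q', Δ q c q' = 1)
    (w : List A) (q : Q) : paAccept Δ F q w ≤ 1 := by
  induction w generalizing q with
  | nil => rw [paAccept_nil]; split <;> norm_num
  | cons c w ih =>
    rw [paAccept_cons]
    calc ∑ q', Δ q c q' * paAccept Δ F q' w ≤ ∑ q', Δ q c q' * 1 :=
          Finset.sum_le_sum fun q' _ =>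
            mul_le_mul_of_nonneg_left (ih q') (hΔ0 q c q')
      _ = 1 := by simp [hΔsum q c]

def wordOp {Q A : Type*} (f : A → (Q → unitInterval) → (Q → unitInterval)) :
    List A → (Q → unitInterval) → (Q → unitInterval)
  | [], x => x
  | c :: w, x => f c (wordOp f w x)

theorem wordOp_append {Q A : Type*} (f : A → (Q → unitInterval) → (Q → unitInterval))
    (w : List A) (c : A) (x : Q → unitInterval) :
    wordOp f (w ++ [c]) x = wordOp f w (f c x) := by
  induction w with
  | nil => rfl
  | cons d w ih => show f d (wordOp f (w ++ [c]) x) = _; rw [ih]; rfl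

theorem wordOp_mono {Q A : Type*} {f : A → (Q → unitInterval) → (Q → unitInterval)}
    (hf : ∀ c, Monotone (f c)) (w : List A) : Monotone (wordOp f w) := by
  induction w with
  | nil => exact monotone_id
  | cons c w ih => exact fun x y h => hf c (ih h)


/-- the value of a probabilistic automaton,
`val(A) = sup_{w ∈ Σ*} A_{q_I}(w)`, equals the least fixed point of the
operator `Ξ(G)(x) = x ⊔ ⨆_{c∈Σ} G(f_c(x))` on the complete lattice of monotone
self-maps of `Q → [0,1]`, applied to the indicator of `F` and evaluated at the
initial state `q_I`. -/
theorem paValue_eq_lfp {Q A : Type*} [Fintype Q] [DecidableEq Q]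
    [Nonempty Q] [Fintype A] [Nonempty A]
    (Δ : Q → A → Q → ℝ) (qI : Q) (F : Finset Q)
    (hΔ0 : ∀ q c q', 0 ≤ Δ q c q') (hΔ1 : ∀ q c q', Δ q c q' ≤ 1)
    (hΔsum : ∀ q c, ∑ q', Δ q c q' = 1)
    -- the transition operators `f_c` on `Q → [0,1]`
    (f : A → (Q → unitInterval) → (Q → unitInterval))
    (hf : ∀ c v q, (f c v q : ℝ) = ∑ q', Δ q c q' * (v q' : ℝ))
    -- the monotone operator `Ξ` on the complete lattice `L` of monotone
    -- self-maps of `Q → [0,1]`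
    (Ξ : ((Q → unitInterval) →o (Q → unitInterval)) →
      ((Q → unitInterval) →o (Q → unitInterval)))
    (hΞmono : Monotone Ξ)
    (hΞ : ∀ G x, Ξ G x = x ⊔ ⨆ c : A, G (f c x))
    -- `LF` is the least fixed point of `Ξ`, given by the Knaster–Tarski theorem
    (LF : (Q → unitInterval) →o (Q → unitInterval))
    (hLF : IsLeast {G | Ξ G = G} LF) :
    (⨆ w : List A, paAccept Δ F qI w)
      = (LF (fun q => if q ∈ F then (1 : unitInterval) else 0) qI : ℝ) := by
  set χ : Q → unitInterval := fun q => if q ∈ F then (1 : unitInterval) else 0 with hχ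
  -- f c is monotone
  have hfmono : ∀ c, Monotone (f c) := by
    intro c v v' h q
    rw [← Subtype.coe_le_coe, hf, hf]
    exact Finset.sum_le_sum fun q' _ =>
      mul_le_mul_of_nonneg_left (Subtype.coe_le_coe.mpr (h q')) (hΔ0 q c q')
  -- accept function as unitInterval-valued
  have hAcc : ∀ w : List A, wordOp f w χ
      = fun q => (⟨paAccept Δ F q w,
          paAccept_nonneg' Δ F hΔ0 w q, paAccept_le_one' Δ F hΔ0 hΔsum w q⟩ : unitInterval) := by
    intro w
    induction w with
    | nil =>
      funext q
      apply Subtype.ext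
      show (χ q : ℝ) = paAccept Δ F q []
      rw [paAccept_nil, hχ]
      by_cases h : q ∈ F <;> simp [h]
    | cons c w ih =>
      funext q
      apply Subtype.ext
      show (f c (wordOp f w χ) q : ℝ) = paAccept Δ F q (c :: w)
      rw [hf, paAccept_cons, ih]
  have hfix : Ξ LF = LF := hLF.1
  -- every iterate is below LF
  have key1 : ∀ (w : List A) (x : Q → unitInterval), wordOp f w x ≤ LF x := by
    intro w
    induction w using List.reverseRecOn with
    | nil =>
      intro x
      show x ≤ LF x
      conv_rhs => rw [← hfix]
      rw [hΞ]
      exact le_sup_left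
    | append_singleton w c ih =>
      intro x
      rw [wordOp_append]
      refine le_trans (ih (f c x)) ?_
      conv_rhs => rw [← hfix]
      rw [hΞ]
      exact le_trans (le_iSup (fun c => LF (f c x)) c) le_sup_right
  -- the candidate least fixed point
  set Gs : (Q → unitInterval) →o (Q → unitInterval) :=
    ⟨fun x => ⨆ w : List A, wordOp f w x,
     fun x y h => iSup_mono fun w => wordOp_mono hfmono w h⟩ with hGs
  have hGfix : Ξ Gs = Gs := by
    apply OrderHom.ext
    funext x
    rw [hΞ]
    apply le_antisymm
    · apply sup_le
      · exact le_iSup (fun w => wordOp f w x) []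
      · refine iSup_le fun c => ?_
        show (⨆ w : List A, wordOp f w (f c x)) ≤ _
        refine iSup_le fun w => ?_
        rw [← wordOp_append]
        exact le_iSup (fun w => wordOp f w x) (w ++ [c])
    · refine iSup_le fun w => ?_
      induction w using List.reverseRecOn with
      | nil => exact le_sup_left
      | append_singleton w c _ =>
        rw [wordOp_append]
        refine le_trans ?_ le_sup_right
        refine le_trans ?_ (le_iSup (fun c => Gs (f c x)) c)
        exact le_iSup (fun w => wordOp f w (f c x)) w
  have hle : LF ≤ Gs := hLF.2 hGfix
  apply le_antisymm
  · refine ciSup_le fun w => ?_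
    have h1 : wordOp f w χ qI ≤ LF χ qI := key1 w χ qI
    have h2 : (wordOp f w χ qI : ℝ) = paAccept Δ F qI w := by rw [hAcc w]
    rw [← h2]
    exact Subtype.coe_le_coe.mpr h1
  · have h1 : LF χ qI ≤ Gs χ qI := hle χ qI
    refine le_trans (Subtype.coe_le_coe.mpr h1) ?_
    have h2 : Gs χ qI = ⨆ w : List A, wordOp f w χ qI := by
      show (⨆ w : List A, wordOp f w χ) qI = _
      rw [iSup_apply]
    rw [h2, Set.Icc.coe_iSup (zero_le_one (α := ℝ))]
    refine ciSup_le fun w => ?_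
    have h3 : (wordOp f w χ qI : ℝ) = paAccept Δ F qI w := by rw [hAcc w]
    rw [h3]
    refine le_ciSup ?_ w
    exact ⟨1, Set.forall_mem_range.mpr fun w => paAccept_le_one' Δ F hΔ0 hΔsum w qI⟩
end

section
/- Let A = (Q, Σ, q_I, Δ, F) be a probabilistic automaton and Ξ the operator Ξ(G)(x) = x ⊔ ⨆_{c∈Σ} G(f_c(x)) on the complete lattice L of monotone self-maps of Q → [0,1]. Then the least fixed point of Ξ equals the supremum of the Kleene iterates, lfp(Ξ) = ⨆_{n∈ℕ} Ξⁿ(⊥_L); equivalently, for every x : Q → [0,1] and every q ∈ Q, lfp(Ξ)(x)(q) = sup_{w ∈ Σ*} f_w(x)(q). -/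
open Finset

/-- the least fixed point of the operator
`Ξ(G)(x) = x ⊔ ⨆_{c∈Σ} G(f_c(x))` on the complete lattice `L` of monotone
self-maps of `Q → [0,1]` equals the supremum `⨆_{n∈ℕ} Ξⁿ(⊥)` of its Kleene
iterates; equivalently, for every `x : Q → [0,1]` and every `q ∈ Q`,
`lfp(Ξ)(x)(q) = sup_{w ∈ Σ*} f_w(x)(q)`. -/
theorem lfp_eq_sup_kleene_iterates {Q A : Type*} [Fintype Q] [DecidableEq Q]
    [Nonempty Q] [Fintype A] [Nonempty A]
    (Δ : Q → A → Q → ℝ)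
    (hΔ0 : ∀ q c q', 0 ≤ Δ q c q') (hΔ1 : ∀ q c q', Δ q c q' ≤ 1)
    (hΔsum : ∀ q c, ∑ q', Δ q c q' = 1)
    -- the transition operators `f_c` on `Q → [0,1]`
    (f : A → (Q → unitInterval) → (Q → unitInterval))
    (hf : ∀ c v q, (f c v q : ℝ) = ∑ q', Δ q c q' * (v q' : ℝ))
    -- the monotone operator `Ξ` on the complete lattice `L` of monotone
    -- self-maps of `Q → [0,1]`
    (Ξ : ((Q → unitInterval) →o (Q → unitInterval)) →
      ((Q → unitInterval) →o (Q → unitInterval)))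
    (hΞmono : Monotone Ξ)
    (hΞ : ∀ G x, Ξ G x = x ⊔ ⨆ c : A, G (f c x))
    -- `LF` is the least fixed point of `Ξ`, given by the Knaster–Tarski theorem
    (LF : (Q → unitInterval) →o (Q → unitInterval))
    (hLF : IsLeast {G | Ξ G = G} LF) :
    (LF = ⨆ n : ℕ, Ξ^[n] ⊥)
      ∧ ∀ (x : Q → unitInterval) (q : Q),
          LF x q = ⨆ w : List A, (w.foldr (fun c g => f c ∘ g) id) x q := by
  -- monotonicity of the transition operators
  have hfmono : ∀ c, Monotone (f c) := by
    intro c v v' hv q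
    rw [← Subtype.coe_le_coe, hf, hf]
    exact Finset.sum_le_sum fun q' _ =>
      mul_le_mul_of_nonneg_left (Subtype.coe_le_coe.mpr (hv q')) (hΔ0 q c q')
  set g : List A → (Q → unitInterval) → (Q → unitInterval) :=
    fun w => w.foldr (fun c g => f c ∘ g) id with hg
  have hgmono : ∀ w, Monotone (g w) := by
    intro w; induction w with
    | nil => exact monotone_id
    | cons c w ih => exact (hfmono c).comp ih
  have hgapp : ∀ w c x, g (w ++ [c]) x = g w (f c x) := by
    intro w c x
    induction w with
    | nil => rfl
    | cons d w ih => simp only [hg, List.cons_append, List.foldr_cons] at ih ⊢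
                     simp only [Function.comp_apply] at ih ⊢
                     rw [ih]
  -- the candidate: sup over all words
  set W : (Q → unitInterval) →o (Q → unitInterval) :=
    ⟨fun x => ⨆ w : List A, g w x, fun x y hxy => iSup_mono fun w => hgmono w hxy⟩ with hW
  have hWapp : ∀ x, W x = ⨆ w : List A, g w x := fun _ => rfl
  have hWfix : Ξ W = W := by
    apply OrderHom.ext; funext x
    rw [hΞ]
    apply le_antisymm
    · apply sup_le
      · exact le_iSup_of_le ([] : List A) le_rfl
      · apply iSup_le; intro c
        rw [hWapp]
        apply iSup_le; intro w
        rw [← hgapp]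
        exact le_iSup_of_le (w ++ [c]) le_rfl
    · rw [hWapp]
      apply iSup_le; intro w
      induction w using List.reverseRecOn with
      | nil => exact le_sup_left
      | append_singleton v c _ =>
        rw [hgapp]
        refine le_trans ?_ le_sup_right
        exact le_trans (le_iSup_of_le v le_rfl : g v (f c x) ≤ W (f c x))
          (le_iSup_of_le c le_rfl)
  have hgle : ∀ w x, g w x ≤ LF x := by
    intro w
    induction w using List.reverseRecOn with
    | nil =>
      intro x
      have := hLF.1
      rw [Set.mem_setOf_eq] at this
      calc x ≤ x ⊔ ⨆ c : A, LF (f c x) := le_sup_left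
        _ = Ξ LF x := (hΞ LF x).symm
        _ = LF x := by rw [this]
    | append_singleton v c ih =>
      intro x
      rw [hgapp]
      refine le_trans (ih (f c x)) ?_
      have hfix := hLF.1
      rw [Set.mem_setOf_eq] at hfix
      calc LF (f c x) ≤ ⨆ c : A, LF (f c x) := le_iSup_of_le c le_rfl
        _ ≤ x ⊔ ⨆ c : A, LF (f c x) := le_sup_right
        _ = Ξ LF x := (hΞ LF x).symm
        _ = LF x := by rw [hfix]
  have hLFW : LF = W := by
    apply le_antisymm (hLF.2 hWfix)
    intro x
    show W x ≤ LF x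
    rw [hWapp]
    exact iSup_le fun w => hgle w x
  constructor
  · -- Kleene iterates
    apply le_antisymm
    · -- LF ≤ sup of iterates: show the sup is a fixed point
      apply hLF.2
      show Ξ (⨆ n : ℕ, Ξ^[n] ⊥) = ⨆ n : ℕ, Ξ^[n] ⊥
      apply OrderHom.ext; funext x
      rw [hΞ]
      have h1 : ∀ (c : A), (⨆ n : ℕ, Ξ^[n] ⊥) (f c x) = ⨆ n : ℕ, Ξ^[n] ⊥ (f c x) :=
        fun c => OrderHom.iSup_apply _ _
      have h2 : (⨆ n : ℕ, Ξ^[n] ⊥) x = ⨆ n : ℕ, Ξ^[n] ⊥ x := OrderHom.iSup_apply _ _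
      rw [h2]
      simp only [h1]
      rw [iSup_comm (f := fun c (n : ℕ) => Ξ^[n] ⊥ (f c x)), sup_iSup]
      have h3 : ∀ n : ℕ, (x ⊔ ⨆ c : A, Ξ^[n] ⊥ (f c x)) = Ξ^[n+1] ⊥ x := by
        intro n
        rw [Function.iterate_succ_apply', hΞ]
      simp only [h3]
      rw [← sup_iSup_nat_succ (fun n => Ξ^[n] ⊥ x)]
      simp
    · refine iSup_le (f := fun n : ℕ => Ξ^[n] ⊥) fun n => ?_
      induction n with
      | zero => exact bot_le
      | succ n ih =>
        show Ξ^[n+1] ⊥ ≤ LF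
        rw [Function.iterate_succ_apply']
        calc Ξ (Ξ^[n] ⊥) ≤ Ξ LF := hΞmono ih
          _ = LF := hLF.1
  · intro x q
    rw [hLFW, hWapp, iSup_apply]
end

section
/- Fix a refined type κ = (T₁,U₁) → ⋯ → (T_k,U_k) → (T,U) over S = {1,…,n}. For every ordinal γ ≥ 1 and every increasing chain (f_α)_{α<γ} of elements of ⟦κ⟧ (i.e. f_α ∈ ⟦κ⟧ for all α < γ and f_α ≤ f_β pointwise whenever α ≤ β < γ), the supremum ⨆_{α<γ} f_α taken in the complete lattice ⟦tr(κ)⟧ belongs to ⟦κ⟧. Dually, for every decreasing chain (f_α)_{α<γ} of elements of ⟦κ⟧, the infimum ⨅_{α<γ} f_α belongs to ⟦κ⟧. -/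
open Finset

/-- `D(T,U)`: the set of `[0,1]`-valued predicates on `S = Fin n` that are
`0` everywhere on `T` and `1` everywhere on `U`. -/
def DTU {n : ℕ} (T U : Set (Fin n)) : Set (Fin n → unitInterval) :=
  {v | (∀ s ∈ T, v s = 0) ∧ (∀ s ∈ U, v s = 1)}

/-- Membership of a tuple of arguments in `D(T₁,U₁) × ⋯ × D(T_k,U_k)`. -/
def InDom {n k : ℕ} (Ts Us : Fin k → Set (Fin n))
    (v : Fin k → Fin n → unitInterval) : Prop :=
  ∀ j, v j ∈ DTU (Ts j) (Us j)

/-- `f` is affine on `D(T₁,U₁) × ⋯ × D(T_k,U_k)`: there are real coefficients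
`c_{s,0}` and `c_{s,j,t}` with
`f(v₁,…,v_k)(s) = c_{s,0} + Σ_j Σ_t c_{s,j,t} · v_j(t)` on that domain. -/
def IsAffineOn {n k : ℕ} (Ts Us : Fin k → Set (Fin n))
    (f : (Fin k → Fin n → unitInterval) → (Fin n → unitInterval)) : Prop :=
  ∃ (c0 : Fin n → ℝ) (c : Fin n → Fin k → Fin n → ℝ),
    ∀ v, InDom Ts Us v → ∀ s,
      (f v s : ℝ) = c0 s + ∑ j, ∑ t, c s j t * (v j t : ℝ)

open Classical in
/-- Base point of the domain: `0` on free and `T` coordinates, `1` on `U`. -/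
noncomputable def basePt {n k : ℕ} (Us : Fin k → Set (Fin n)) :
    Fin k → Fin n → unitInterval :=
  fun j t => if t ∈ Us j then 1 else 0

open Classical in
/-- Probe point: base point with coordinate `(j,t)` set to `1`. -/
noncomputable def probePt {n k : ℕ} (Us : Fin k → Set (Fin n))
    (j : Fin k) (t : Fin n) : Fin k → Fin n → unitInterval :=
  fun j' t' => if j' = j ∧ t' = t then 1 else basePt Us j' t'

lemma basePt_mem {n k : ℕ} {Ts Us : Fin k → Set (Fin n)}
    (hdisj : ∀ j, Disjoint (Ts j) (Us j)) : InDom Ts Us (basePt Us) := by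
  intro j
  constructor
  · intro s hs
    have : s ∉ Us j := fun h => (hdisj j).le_bot ⟨hs, h⟩
    simp [basePt, this]
  · intro s hs; simp [basePt, hs]

lemma probePt_mem {n k : ℕ} {Ts Us : Fin k → Set (Fin n)}
    (hdisj : ∀ j, Disjoint (Ts j) (Us j)) {j : Fin k} {t : Fin n}
    (hfree : t ∉ Ts j ∧ t ∉ Us j) : InDom Ts Us (probePt Us j t) := by
  intro j'
  constructor
  · intro s hs
    have h1 : ¬(j' = j ∧ s = t) := by rintro ⟨rfl, rfl⟩; exact hfree.1 hs
    have h2 : s ∉ Us j' := fun h => (hdisj j').le_bot ⟨hs, h⟩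
    simp [probePt, h1, basePt, h2]
  · intro s hs
    by_cases h1 : j' = j ∧ s = t
    · simp [probePt, h1]
    · simp [probePt, h1, basePt, hs]

lemma probe_diff {n k : ℕ} {Ts Us : Fin k → Set (Fin n)}
    (hdisj : ∀ j, Disjoint (Ts j) (Us j))
    {f : (Fin k → Fin n → unitInterval) → (Fin n → unitInterval)}
    {c0 : Fin n → ℝ} {c : Fin n → Fin k → Fin n → ℝ}
    (hc : ∀ v, InDom Ts Us v → ∀ s,
      (f v s : ℝ) = c0 s + ∑ j, ∑ t, c s j t * (v j t : ℝ))
    {j : Fin k} {t : Fin n} (hfree : t ∉ Ts j ∧ t ∉ Us j) (s : Fin n) :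
    (f (probePt Us j t) s : ℝ) - (f (basePt Us) s : ℝ) = c s j t := by
  classical
  rw [hc _ (probePt_mem hdisj hfree) s, hc _ (basePt_mem hdisj) s]
  have hterm : ∀ j' t', c s j' t' * (probePt Us j t j' t' : ℝ)
      - c s j' t' * (basePt Us j' t' : ℝ)
      = if j' = j ∧ t' = t then c s j t else 0 := by
    intro j' t'
    by_cases h : j' = j ∧ t' = t
    · obtain ⟨rfl, rfl⟩ := h
      simp [probePt, basePt, hfree.2]
    · simp [probePt, h]
  have h1 : (∑ j', ∑ t', c s j' t' * (probePt Us j t j' t' : ℝ))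
      - (∑ j', ∑ t', c s j' t' * (basePt Us j' t' : ℝ))
      = ∑ j', ∑ t', (if j' = j ∧ t' = t then c s j t else 0) := by
    rw [← Finset.sum_sub_distrib]
    refine Finset.sum_congr rfl fun j' _ => ?_
    rw [← Finset.sum_sub_distrib]
    exact Finset.sum_congr rfl fun t' _ => hterm j' t'
  have h2 : (∑ j', ∑ t' : Fin n, (if j' = j ∧ t' = t then c s j t else 0)) = c s j t := by
    rw [Finset.sum_eq_single j]
    · rw [Finset.sum_eq_single t]
      · simp
      · intro b _ hb; simp [hb]
      · simp
    · intro b _ hb; simp [hb]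
    · simp
  linarith

open Classical in
lemma affine_normal_form {n k : ℕ} {Ts Us : Fin k → Set (Fin n)}
    (hdisj : ∀ j, Disjoint (Ts j) (Us j))
    {f : (Fin k → Fin n → unitInterval) → (Fin n → unitInterval)}
    (hf : IsAffineOn Ts Us f)
    (v : Fin k → Fin n → unitInterval) (hv : InDom Ts Us v) (s : Fin n) :
    (f v s : ℝ) = (f (basePt Us) s : ℝ) +
      ∑ j, ∑ t, (if t ∉ Ts j ∧ t ∉ Us j then
        (f (probePt Us j t) s : ℝ) - (f (basePt Us) s : ℝ) else 0) * (v j t : ℝ) := by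
  classical
  obtain ⟨c0, c, hc⟩ := hf
  have hterm : ∀ j t, (if t ∉ Ts j ∧ t ∉ Us j then
        (f (probePt Us j t) s : ℝ) - (f (basePt Us) s : ℝ) else 0) * (v j t : ℝ)
      = c s j t * (v j t : ℝ) - c s j t * (basePt Us j t : ℝ) := by
    intro j t
    by_cases h : t ∉ Ts j ∧ t ∉ Us j
    · rw [if_pos h, probe_diff hdisj hc h s]
      have hb : (basePt Us j t : ℝ) = 0 := by simp [basePt, h.2]
      rw [hb]; ring
    · rw [if_neg h]
      by_cases hT : t ∈ Ts j
      · have hv0 : (v j t : ℝ) = 0 := by rw [(hv j).1 t hT]; simp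
        have hb : (basePt Us j t : ℝ) = 0 := by
          have : t ∉ Us j := fun hU => (hdisj j).le_bot ⟨hT, hU⟩
          simp [basePt, this]
        rw [hv0, hb]; ring
      · have hU : t ∈ Us j := by tauto
        have hv1 : (v j t : ℝ) = 1 := by rw [(hv j).2 t hU]; simp
        have hb : (basePt Us j t : ℝ) = 1 := by simp [basePt, hU]
        rw [hv1, hb]; ring
  have hv' := hc v hv s
  have hb' := hc _ (basePt_mem hdisj) s
  have hsum : (∑ j, ∑ t, (if t ∉ Ts j ∧ t ∉ Us j then
        (f (probePt Us j t) s : ℝ) - (f (basePt Us) s : ℝ) else 0) * (v j t : ℝ))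
      = (∑ j, ∑ t, c s j t * (v j t : ℝ)) - ∑ j, ∑ t, c s j t * (basePt Us j t : ℝ) := by
    rw [← Finset.sum_sub_distrib]
    refine Finset.sum_congr rfl fun j _ => ?_
    rw [← Finset.sum_sub_distrib]
    exact Finset.sum_congr rfl fun t _ => hterm j t
  linarith [hv', hb', hsum]

open Classical in
/-- If `g` is pointwise approximated (at each point of the domain, at the base
point, and at every free probe point) by affine functions, then `g` is affine
on the domain. -/
lemma approx_affine {n k : ℕ} {Ts Us : Fin k → Set (Fin n)}
    (hdisj : ∀ j, Disjoint (Ts j) (Us j))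
    {g : (Fin k → Fin n → unitInterval) → (Fin n → unitInterval)}
    (H : ∀ ε : ℝ, 0 < ε → ∀ v, InDom Ts Us v → ∀ s : Fin n,
      ∃ f, IsAffineOn Ts Us f ∧
        |(g v s : ℝ) - (f v s : ℝ)| ≤ ε ∧
        |(g (basePt Us) s : ℝ) - (f (basePt Us) s : ℝ)| ≤ ε ∧
        ∀ j t, (t ∉ Ts j ∧ t ∉ Us j) →
          |(g (probePt Us j t) s : ℝ) - (f (probePt Us j t) s : ℝ)| ≤ ε) :
    IsAffineOn Ts Us g := by
  refine ⟨fun s => (g (basePt Us) s : ℝ),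
    fun s j t => if t ∉ Ts j ∧ t ∉ Us j then
      (g (probePt Us j t) s : ℝ) - (g (basePt Us) s : ℝ) else 0, ?_⟩
  intro v hv s
  set R : ℝ := (g (basePt Us) s : ℝ) + ∑ j, ∑ t, (if t ∉ Ts j ∧ t ∉ Us j then
      (g (probePt Us j t) s : ℝ) - (g (basePt Us) s : ℝ) else 0) * (v j t : ℝ) with hR
  have key : ∀ ε : ℝ, 0 < ε → |(g v s : ℝ) - R| ≤ ε * (2 + 2 * (k * n : ℝ)) := by
    intro ε hε
    obtain ⟨F, hFaff, h1, h2, h3⟩ := H ε hε v hv s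
    have hNF := affine_normal_form hdisj hFaff v hv s
    have hsplit : (g v s : ℝ) - R = ((g v s : ℝ) - (F v s : ℝ))
        + ((F (basePt Us) s : ℝ) - (g (basePt Us) s : ℝ))
        + ∑ j, ∑ t, ((if t ∉ Ts j ∧ t ∉ Us j then
              (F (probePt Us j t) s : ℝ) - (F (basePt Us) s : ℝ) else 0)
            - (if t ∉ Ts j ∧ t ∉ Us j then
              (g (probePt Us j t) s : ℝ) - (g (basePt Us) s : ℝ) else 0)) * (v j t : ℝ) := by
      simp only [sub_mul, Finset.sum_sub_distrib, hR]
      linarith [hNF]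
    have hterm : ∀ j t, |((if t ∉ Ts j ∧ t ∉ Us j then
              (F (probePt Us j t) s : ℝ) - (F (basePt Us) s : ℝ) else 0)
            - (if t ∉ Ts j ∧ t ∉ Us j then
              (g (probePt Us j t) s : ℝ) - (g (basePt Us) s : ℝ) else 0)) * (v j t : ℝ)|
        ≤ 2 * ε := by
      intro j t
      by_cases h : t ∉ Ts j ∧ t ∉ Us j
      · rw [if_pos h, if_pos h]
        have h3' := h3 j t h
        have hva : |(v j t : ℝ)| ≤ 1 := by
          rw [abs_of_nonneg (v j t).2.1]; exact (v j t).2.2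
        calc |((F (probePt Us j t) s : ℝ) - (F (basePt Us) s : ℝ)
              - ((g (probePt Us j t) s : ℝ) - (g (basePt Us) s : ℝ))) * (v j t : ℝ)|
            = |(F (probePt Us j t) s : ℝ) - (F (basePt Us) s : ℝ)
              - ((g (probePt Us j t) s : ℝ) - (g (basePt Us) s : ℝ))| * |(v j t : ℝ)| :=
              abs_mul _ _
          _ ≤ |(F (probePt Us j t) s : ℝ) - (F (basePt Us) s : ℝ)
              - ((g (probePt Us j t) s : ℝ) - (g (basePt Us) s : ℝ))| * 1 := by
              exact mul_le_mul_of_nonneg_left hva (abs_nonneg _)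
          _ ≤ 2 * ε := by
              rw [mul_one]
              rw [abs_le] at h2 h3' ⊢
              constructor <;> [linarith [h2.1, h2.2, h3'.1, h3'.2];
                linarith [h2.1, h2.2, h3'.1, h3'.2]]
      · rw [if_neg h, if_neg h]
        simp
        positivity
    calc |(g v s : ℝ) - R| ≤ |(g v s : ℝ) - (F v s : ℝ)|
        + |(F (basePt Us) s : ℝ) - (g (basePt Us) s : ℝ)|
        + |∑ j, ∑ t, ((if t ∉ Ts j ∧ t ∉ Us j then
              (F (probePt Us j t) s : ℝ) - (F (basePt Us) s : ℝ) else 0)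
            - (if t ∉ Ts j ∧ t ∉ Us j then
              (g (probePt Us j t) s : ℝ) - (g (basePt Us) s : ℝ) else 0)) * (v j t : ℝ)| := by
          rw [hsplit]; exact (abs_add_three _ _ _)
      _ ≤ ε + ε + (k * n : ℝ) * (2 * ε) := by
          have hb : |(F (basePt Us) s : ℝ) - (g (basePt Us) s : ℝ)| ≤ ε := by
            rw [abs_sub_comm]; exact h2
          have hsum : |∑ j, ∑ t, ((if t ∉ Ts j ∧ t ∉ Us j then
              (F (probePt Us j t) s : ℝ) - (F (basePt Us) s : ℝ) else 0)
            - (if t ∉ Ts j ∧ t ∉ Us j then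
              (g (probePt Us j t) s : ℝ) - (g (basePt Us) s : ℝ) else 0)) * (v j t : ℝ)|
              ≤ (k * n : ℝ) * (2 * ε) := by
            calc |∑ j, ∑ t, _| ≤ ∑ j : Fin k, |∑ t : Fin n, ((if t ∉ Ts j ∧ t ∉ Us j then
                  (F (probePt Us j t) s : ℝ) - (F (basePt Us) s : ℝ) else 0)
                - (if t ∉ Ts j ∧ t ∉ Us j then
                  (g (probePt Us j t) s : ℝ) - (g (basePt Us) s : ℝ) else 0)) * (v j t : ℝ)| :=
                Finset.abs_sum_le_sum_abs _ _
              _ ≤ ∑ _j : Fin k, (n : ℝ) * (2 * ε) := by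
                  refine Finset.sum_le_sum fun j _ => ?_
                  calc |∑ t : Fin n, _| ≤ ∑ t : Fin n, (2 * ε) :=
                      (Finset.abs_sum_le_sum_abs _ _).trans
                        (Finset.sum_le_sum fun t _ => hterm j t)
                    _ = (n : ℝ) * (2 * ε) := by
                        simp [Finset.sum_const, Finset.card_univ, nsmul_eq_mul]
              _ = (k * n : ℝ) * (2 * ε) := by
                  simp [Finset.sum_const, Finset.card_univ, nsmul_eq_mul]; ring
          linarith [h1, hb, hsum]
      _ = ε * (2 + 2 * (k * n : ℝ)) := by ring
  have habs : |(g v s : ℝ) - R| ≤ 0 := by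
    refine le_of_forall_pos_le_add fun δ hδ => ?_
    have hC : (0:ℝ) < 2 + 2 * (k * n : ℝ) := by positivity
    have := key (δ / (2 + 2 * (k * n : ℝ))) (by positivity)
    calc |(g v s : ℝ) - R| ≤ (δ / (2 + 2 * (k * n : ℝ))) * (2 + 2 * (k * n : ℝ)) := this
      _ = δ := by field_simp
      _ ≤ 0 + δ := by linarith
  have := abs_eq_zero.mp (le_antisymm habs (abs_nonneg _))
  linarith [sub_eq_zero.mp this, le_of_eq (sub_eq_zero.mp this)]

/-- `f ∈ ⟦κ⟧` for the refined type `κ = (T₁,U₁) → ⋯ → (T_k,U_k) → (T,U)`: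
`f` is a monotone map `Q_S^k → Q_S` that is affine on the domain and maps the
domain into `D(T,U)`. -/
def InRefined {n k : ℕ} (Ts Us : Fin k → Set (Fin n)) (T U : Set (Fin n))
    (f : (Fin k → Fin n → unitInterval) →o (Fin n → unitInterval)) : Prop :=
  IsAffineOn Ts Us f ∧ ∀ v, InDom Ts Us v → f v ∈ DTU T U

/-- for every ordinal `γ ≥ 1`, the supremum (taken in the
complete lattice `⟦tr(κ)⟧` of monotone maps) of an increasing chain
`(f_α)_{α<γ}` of elements of `⟦κ⟧` again belongs to `⟦κ⟧`; dually, the infimum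
of a decreasing chain of elements of `⟦κ⟧` belongs to `⟦κ⟧`. -/
theorem refined_closed_under_chain_limits {n k : ℕ} (hn : 1 ≤ n)
    (Ts Us : Fin k → Set (Fin n)) (T U : Set (Fin n))
    (hdisj : ∀ j, Disjoint (Ts j) (Us j)) (hTU : Disjoint T U)
    (γ : Ordinal) (hγ : 1 ≤ γ)
    (f : Ordinal → ((Fin k → Fin n → unitInterval) →o (Fin n → unitInterval))) :
    ((∀ α β, α ≤ β → β < γ → f α ≤ f β) →
      (∀ α, α < γ → InRefined Ts Us T U (f α)) →
      InRefined Ts Us T U (⨆ α : {α : Ordinal // α < γ}, f α.1))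
    ∧ ((∀ α β, α ≤ β → β < γ → f β ≤ f α) →
      (∀ α, α < γ → InRefined Ts Us T U (f α)) →
      InRefined Ts Us T U (⨅ α : {α : Ordinal // α < γ}, f α.1)) := by
  have h0γ : (0 : Ordinal) < γ := lt_of_lt_of_le zero_lt_one hγ
  haveI hne : Nonempty {α : Ordinal // α < γ} := ⟨⟨0, h0γ⟩⟩
  constructor
  · -- supremum of an increasing chain
    intro hchain hmem
    set g : (Fin k → Fin n → unitInterval) →o (Fin n → unitInterval) :=
      ⨆ α : {α : Ordinal // α < γ}, f α.1 with hg
    have hcoe : ∀ x s, ((g x s : ℝ)) = ⨆ α : {α : Ordinal // α < γ}, ((f α.1 x s : ℝ)) := by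
      intro x s
      rw [hg, OrderHom.iSup_apply, iSup_apply]
      exact Set.Icc.coe_iSup zero_le_one
    have hbdd : ∀ x s, BddAbove (Set.range fun α : {α : Ordinal // α < γ} =>
        ((f α.1 x s : ℝ))) := fun x s => ⟨1, by rintro _ ⟨α, rfl⟩; exact (f α.1 x s).2.2⟩
    have hle : ∀ (α : {α : Ordinal // α < γ}) x s, ((f α.1 x s : ℝ)) ≤ (g x s : ℝ) := by
      intro α x s; rw [hcoe]; exact le_ciSup (hbdd x s) α
    have happrox : ∀ x (s : Fin n) (ε : ℝ), 0 < ε →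
        ∃ α : Ordinal, α < γ ∧ (g x s : ℝ) - ((f α x s : ℝ)) ≤ ε := by
      intro x s ε hε
      have h : (g x s : ℝ) - ε < ⨆ α : {α : Ordinal // α < γ}, ((f α.1 x s : ℝ)) := by
        rw [← hcoe]; linarith
      obtain ⟨α, hα⟩ := exists_lt_of_lt_ciSup h
      exact ⟨α.1, α.2, by linarith⟩
    constructor
    · refine approx_affine hdisj ?_
      intro ε hε v hv s
      obtain ⟨α₁, hα₁, h1⟩ := happrox v s ε hε
      obtain ⟨α₂, hα₂, h2⟩ := happrox (basePt Us) s ε hε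
      have h3 : ∀ p : Fin k × Fin n, ∃ α, α < γ ∧
          ((p.2 ∉ Ts p.1 ∧ p.2 ∉ Us p.1) →
            (g (probePt Us p.1 p.2) s : ℝ) - ((f α (probePt Us p.1 p.2) s : ℝ)) ≤ ε) := by
        intro p
        by_cases hp : p.2 ∉ Ts p.1 ∧ p.2 ∉ Us p.1
        · obtain ⟨α, hα, h⟩ := happrox (probePt Us p.1 p.2) s ε hε
          exact ⟨α, hα, fun _ => h⟩
        · exact ⟨0, h0γ, fun h => absurd h hp⟩
      choose A hAlt hAle using h3
      set β : Ordinal := max (max α₁ α₂) (Finset.univ.sup A) with hβdef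
      have hβ : β < γ := by
        refine max_lt (max_lt hα₁ hα₂) ?_
        exact (Finset.sup_lt_iff (show (⊥ : Ordinal) < γ from h0γ)).mpr fun p _ => hAlt p
      have hmono : ∀ α : Ordinal, α ≤ β → ∀ x s, ((f α x s : ℝ)) ≤ ((f β x s : ℝ)) := by
        intro α hαβ x s
        exact_mod_cast (hchain α β hαβ hβ x s)
      have hclose : ∀ (α : Ordinal) x, α ≤ β →
          ((g x s : ℝ) - ((f α x s : ℝ)) ≤ ε) →
          |(g x s : ℝ) - ((f β x s : ℝ))| ≤ ε := by
        intro α x hαβ hαε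
        rw [abs_of_nonneg (by linarith [hle ⟨β, hβ⟩ x s])]
        linarith [hmono α hαβ x s]
      refine ⟨⇑(f β), (hmem β hβ).1, ?_, ?_, ?_⟩
      · exact hclose α₁ v ((le_max_left _ _).trans (le_max_left _ _)) h1
      · exact hclose α₂ (basePt Us) ((le_max_right _ _).trans (le_max_left _ _)) h2
      · intro j t ht
        exact hclose (A (j, t)) (probePt Us j t)
          ((Finset.le_sup (Finset.mem_univ (j, t))).trans (le_max_right _ _))
          (hAle (j, t) ht)
    · intro v hv
      constructor
      · intro s hs
        have hz : ∀ α : {α : Ordinal // α < γ}, f α.1 v s = 0 :=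
          fun α => ((hmem α.1 α.2).2 v hv).1 s hs
        calc g v s = ⨆ α : {α : Ordinal // α < γ}, f α.1 v s := by
              rw [hg, OrderHom.iSup_apply, iSup_apply]
          _ = ⨆ _α : {α : Ordinal // α < γ}, (0 : unitInterval) := by
              exact iSup_congr hz
          _ = 0 := iSup_const
      · intro s hs
        have hz : ∀ α : {α : Ordinal // α < γ}, f α.1 v s = 1 :=
          fun α => ((hmem α.1 α.2).2 v hv).2 s hs
        calc g v s = ⨆ α : {α : Ordinal // α < γ}, f α.1 v s := by
              rw [hg, OrderHom.iSup_apply, iSup_apply]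
          _ = ⨆ _α : {α : Ordinal // α < γ}, (1 : unitInterval) := by
              exact iSup_congr hz
          _ = 1 := iSup_const
  · -- infimum of a decreasing chain
    intro hchain hmem
    set g : (Fin k → Fin n → unitInterval) →o (Fin n → unitInterval) :=
      ⨅ α : {α : Ordinal // α < γ}, f α.1 with hg
    have hcoe : ∀ x s, ((g x s : ℝ)) = ⨅ α : {α : Ordinal // α < γ}, ((f α.1 x s : ℝ)) := by
      intro x s
      rw [hg, OrderHom.iInf_apply, iInf_apply]
      exact Set.Icc.coe_iInf zero_le_one
    have hbdd : ∀ x s, BddBelow (Set.range fun α : {α : Ordinal // α < γ} =>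
        ((f α.1 x s : ℝ))) := fun x s => ⟨0, by rintro _ ⟨α, rfl⟩; exact (f α.1 x s).2.1⟩
    have hle : ∀ (α : {α : Ordinal // α < γ}) x s, (g x s : ℝ) ≤ ((f α.1 x s : ℝ)) := by
      intro α x s; rw [hcoe]; exact ciInf_le (hbdd x s) α
    have happrox : ∀ x (s : Fin n) (ε : ℝ), 0 < ε →
        ∃ α : Ordinal, α < γ ∧ ((f α x s : ℝ)) - (g x s : ℝ) ≤ ε := by
      intro x s ε hε
      have h : (⨅ α : {α : Ordinal // α < γ}, ((f α.1 x s : ℝ))) < (g x s : ℝ) + ε := by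
        rw [← hcoe]; linarith
      obtain ⟨α, hα⟩ := exists_lt_of_ciInf_lt h
      exact ⟨α.1, α.2, by linarith⟩
    constructor
    · refine approx_affine hdisj ?_
      intro ε hε v hv s
      obtain ⟨α₁, hα₁, h1⟩ := happrox v s ε hε
      obtain ⟨α₂, hα₂, h2⟩ := happrox (basePt Us) s ε hε
      have h3 : ∀ p : Fin k × Fin n, ∃ α, α < γ ∧
          ((p.2 ∉ Ts p.1 ∧ p.2 ∉ Us p.1) →
            ((f α (probePt Us p.1 p.2) s : ℝ)) - (g (probePt Us p.1 p.2) s : ℝ) ≤ ε) := by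
        intro p
        by_cases hp : p.2 ∉ Ts p.1 ∧ p.2 ∉ Us p.1
        · obtain ⟨α, hα, h⟩ := happrox (probePt Us p.1 p.2) s ε hε
          exact ⟨α, hα, fun _ => h⟩
        · exact ⟨0, h0γ, fun h => absurd h hp⟩
      choose A hAlt hAle using h3
      set β : Ordinal := max (max α₁ α₂) (Finset.univ.sup A) with hβdef
      have hβ : β < γ := by
        refine max_lt (max_lt hα₁ hα₂) ?_
        exact (Finset.sup_lt_iff (show (⊥ : Ordinal) < γ from h0γ)).mpr fun p _ => hAlt p
      have hmono : ∀ α : Ordinal, α ≤ β → ∀ x s, ((f β x s : ℝ)) ≤ ((f α x s : ℝ)) := by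
        intro α hαβ x s
        exact_mod_cast (hchain α β hαβ hβ x s)
      have hclose : ∀ (α : Ordinal) x, α ≤ β →
          (((f α x s : ℝ)) - (g x s : ℝ) ≤ ε) →
          |(g x s : ℝ) - ((f β x s : ℝ))| ≤ ε := by
        intro α x hαβ hαε
        rw [abs_of_nonpos (by linarith [hle ⟨β, hβ⟩ x s])]
        linarith [hmono α hαβ x s]
      refine ⟨⇑(f β), (hmem β hβ).1, ?_, ?_, ?_⟩
      · exact hclose α₁ v ((le_max_left _ _).trans (le_max_left _ _)) h1
      · exact hclose α₂ (basePt Us) ((le_max_right _ _).trans (le_max_left _ _)) h2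
      · intro j t ht
        exact hclose (A (j, t)) (probePt Us j t)
          ((Finset.le_sup (Finset.mem_univ (j, t))).trans (le_max_right _ _))
          (hAle (j, t) ht)
    · intro v hv
      constructor
      · intro s hs
        have hz : ∀ α : {α : Ordinal // α < γ}, f α.1 v s = 0 :=
          fun α => ((hmem α.1 α.2).2 v hv).1 s hs
        calc g v s = ⨅ α : {α : Ordinal // α < γ}, f α.1 v s := by
              rw [hg, OrderHom.iInf_apply, iInf_apply]
          _ = ⨅ _α : {α : Ordinal // α < γ}, (0 : unitInterval) := by
              exact iInf_congr hz
          _ = 0 := iInf_const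
      · intro s hs
        have hz : ∀ α : {α : Ordinal // α < γ}, f α.1 v s = 1 :=
          fun α => ((hmem α.1 α.2).2 v hv).2 s hs
        calc g v s = ⨅ α : {α : Ordinal // α < γ}, f α.1 v s := by
              rw [hg, OrderHom.iInf_apply, iInf_apply]
          _ = ⨅ _α : {α : Ordinal // α < γ}, (1 : unitInterval) := by
              exact iInf_congr hz
          _ = 1 := iInf_const
end

section
/- Fix a refined type κ = (T₁,U₁) → ⋯ → (T_k,U_k) → (T,U) over S = {1,…,n}, and let h be a monotone function from ⟦tr(κ)⟧ to itself such that h(x) ∈ ⟦κ⟧ for every x ∈ ⟦κ⟧. If U = ∅ then the least fixed point lfp(h), taken in the complete lattice ⟦tr(κ)⟧, belongs to ⟦κ⟧. Dually, if T = ∅ then the greatest fixed point gfp(h) belongs to ⟦κ⟧. -/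
open Finset

/-! ### Auxiliary definitions -/

open Classical in
/-- The bottom vertex of the domain `D(T₁,U₁)×⋯×D(T_k,U_k)`. -/
noncomputable def rbase {n k : ℕ} (Us : Fin k → Set (Fin n)) :
    Fin k → Fin n → unitInterval :=
  fun j t => if t ∈ Us j then 1 else 0

open Classical in
/-- The vertex of the domain obtained from `rbase` by raising coordinate `(j₀,t₀)` to `1`. -/
noncomputable def rvert {n k : ℕ} (Us : Fin k → Set (Fin n)) (j₀ : Fin k) (t₀ : Fin n) :
    Fin k → Fin n → unitInterval :=
  fun j t => if (j = j₀ ∧ t = t₀) ∨ t ∈ Us j then 1 else 0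

lemma rbase_mem {n k : ℕ} {Ts Us : Fin k → Set (Fin n)}
    (hdisj : ∀ j, Disjoint (Ts j) (Us j)) : InDom Ts Us (rbase Us) := by
  intro j
  refine ⟨fun t ht => ?_, fun t ht => ?_⟩
  · have : t ∉ Us j := fun hu => (hdisj j).ne_of_mem ht hu rfl
    simp [rbase, this]
  · simp [rbase, ht]

lemma rvert_mem {n k : ℕ} {Ts Us : Fin k → Set (Fin n)}
    (hdisj : ∀ j, Disjoint (Ts j) (Us j)) {j₀ : Fin k} {t₀ : Fin n} (ht₀ : t₀ ∉ Ts j₀) :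
    InDom Ts Us (rvert Us j₀ t₀) := by
  intro j
  refine ⟨fun t ht => ?_, fun t ht => ?_⟩
  · have h1 : ¬(j = j₀ ∧ t = t₀) := by
      rintro ⟨rfl, rfl⟩; exact ht₀ ht
    have h2 : t ∉ Us j := fun hu => (hdisj j).ne_of_mem ht hu rfl
    simp [rvert, h1, h2]
  · simp [rvert, ht]

open Classical in
/-- Canonical coefficient of an affine map, read off from its values at vertices. -/
noncomputable def dcl {n k : ℕ} (Ts Us : Fin k → Set (Fin n))
    (f : (Fin k → Fin n → unitInterval) → (Fin n → unitInterval))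
    (s : Fin n) (j : Fin k) (t : Fin n) : ℝ :=
  if t ∈ Ts j ∪ Us j then 0
  else ((f (rvert Us j t) s : ℝ) - (f (rbase Us) s : ℝ))

/-- Canonical vertex form of a map affine on the domain. -/
lemma affine_canonical {n k : ℕ} {Ts Us : Fin k → Set (Fin n)}
    (hdisj : ∀ j, Disjoint (Ts j) (Us j))
    {f : (Fin k → Fin n → unitInterval) → (Fin n → unitInterval)}
    (hf : IsAffineOn Ts Us f) :
    ∀ v, InDom Ts Us v → ∀ s,
      (f v s : ℝ) = (f (rbase Us) s : ℝ) + ∑ j, ∑ t, dcl Ts Us f s j t * (v j t : ℝ) := by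
  classical
  obtain ⟨c0, c, hc⟩ := hf
  intro v hv s
  -- difference form with masked coefficients
  have key : ∀ v₁ v₂, InDom Ts Us v₁ → InDom Ts Us v₂ →
      (f v₁ s : ℝ) - (f v₂ s : ℝ)
        = ∑ j, ∑ t, (if t ∈ Ts j ∪ Us j then (0:ℝ) else c s j t)
            * ((v₁ j t : ℝ) - (v₂ j t : ℝ)) := by
    intro v₁ v₂ h₁ h₂
    have hterm : ∀ j t, (if t ∈ Ts j ∪ Us j then (0:ℝ) else c s j t)
        * ((v₁ j t : ℝ) - (v₂ j t : ℝ))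
        = c s j t * (v₁ j t : ℝ) - c s j t * (v₂ j t : ℝ) := by
      intro j t
      by_cases hT : t ∈ Ts j
      · rw [if_pos (Set.mem_union_left _ hT), (h₁ j).1 t hT, (h₂ j).1 t hT]
        norm_num
      · by_cases hU : t ∈ Us j
        · rw [if_pos (Set.mem_union_right _ hU), (h₁ j).2 t hU, (h₂ j).2 t hU]
          norm_num
        · rw [if_neg (by simp [hT, hU])]
          ring
    simp only [hterm, Finset.sum_sub_distrib]
    rw [hc v₁ h₁ s, hc v₂ h₂ s]
    ring
  have hbase := rbase_mem (Ts := Ts) hdisj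
  -- masked coefficients equal `dcl` wherever they matter
  have hcoef : ∀ j₀ t₀, t₀ ∉ Ts j₀ → t₀ ∉ Us j₀ →
      (f (rvert Us j₀ t₀) s : ℝ) - (f (rbase Us) s : ℝ) = c s j₀ t₀ := by
    intro j₀ t₀ hT hU
    rw [key _ _ (rvert_mem hdisj hT) hbase]
    have hjj : ∀ j, j ≠ j₀ →
        (∑ t, (if t ∈ Ts j ∪ Us j then (0:ℝ) else c s j t)
          * ((rvert Us j₀ t₀ j t : ℝ) - (rbase Us j t : ℝ))) = 0 := by
      intro j hj
      apply Finset.sum_eq_zero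
      intro t _
      have : rvert Us j₀ t₀ j t = rbase Us j t := by
        simp [rvert, rbase, hj]
      rw [this]; ring
    rw [Finset.sum_eq_single j₀ (fun j _ hj => hjj j hj) (by simp)]
    have htt : ∀ t, t ≠ t₀ →
        (if t ∈ Ts j₀ ∪ Us j₀ then (0:ℝ) else c s j₀ t)
          * ((rvert Us j₀ t₀ j₀ t : ℝ) - (rbase Us j₀ t : ℝ)) = 0 := by
      intro t ht
      have : rvert Us j₀ t₀ j₀ t = rbase Us j₀ t := by
        simp [rvert, rbase, ht]
      rw [this]; ring
    rw [Finset.sum_eq_single t₀ (fun t _ ht => htt t ht) (by simp)]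
    have h1 : rvert Us j₀ t₀ j₀ t₀ = 1 := by simp [rvert]
    have h2 : rbase Us j₀ t₀ = 0 := by simp [rbase, hU]
    rw [if_neg (by simp [hT, hU]), h1, h2]
    simp
  have hmain := key v (rbase Us) hv hbase
  have hsum : ∑ j, ∑ t, (if t ∈ Ts j ∪ Us j then (0:ℝ) else c s j t)
      * ((v j t : ℝ) - (rbase Us j t : ℝ))
      = ∑ j, ∑ t, dcl Ts Us f s j t * (v j t : ℝ) := by
    apply Finset.sum_congr rfl
    intro j _
    apply Finset.sum_congr rfl
    intro t _
    by_cases hT : t ∈ Ts j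
    · rw [if_pos (Set.mem_union_left _ hT)]
      rw [dcl, if_pos (Set.mem_union_left _ hT)]
      ring
    · by_cases hU : t ∈ Us j
      · rw [if_pos (Set.mem_union_right _ hU)]
        rw [dcl, if_pos (Set.mem_union_right _ hU)]
        ring
      · rw [if_neg (by simp [hT, hU]), dcl, if_neg (by simp [hT, hU])]
        rw [hcoef j t hT hU]
        have : rbase Us j t = 0 := by simp [rbase, hU]
        rw [this]
        simp
  rw [hsum] at hmain
  linarith
/-! ### Chain suprema and infima of order homs -/

/-- Pointwise supremum of a set of monotone maps, as a monotone map. -/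
noncomputable def chainSup {n k : ℕ}
    (C : Set ((Fin k → Fin n → unitInterval) →o (Fin n → unitInterval))) :
    (Fin k → Fin n → unitInterval) →o (Fin n → unitInterval) :=
  ⟨fun v s => sSup ((fun f : (Fin k → Fin n → unitInterval) →o (Fin n → unitInterval)
      => f v s) '' C), by
    intro v w hvw s
    apply sSup_le
    rintro x ⟨f, hf, rfl⟩
    exact le_trans (f.mono hvw s) (le_sSup ⟨f, hf, rfl⟩)⟩

noncomputable def chainInf {n k : ℕ}
    (C : Set ((Fin k → Fin n → unitInterval) →o (Fin n → unitInterval))) :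
    (Fin k → Fin n → unitInterval) →o (Fin n → unitInterval) :=
  ⟨fun v s => sInf ((fun f : (Fin k → Fin n → unitInterval) →o (Fin n → unitInterval)
      => f v s) '' C), by
    intro v w hvw s
    apply le_sInf
    rintro x ⟨f, hf, rfl⟩
    exact le_trans (sInf_le ⟨f, hf, rfl⟩) (f.mono hvw s)⟩

lemma le_chainSup {n k : ℕ}
    {C : Set ((Fin k → Fin n → unitInterval) →o (Fin n → unitInterval))}
    {f} (hf : f ∈ C) : f ≤ chainSup C :=
  fun v s => le_sSup ⟨f, hf, rfl⟩

lemma chainSup_le {n k : ℕ}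
    {C : Set ((Fin k → Fin n → unitInterval) →o (Fin n → unitInterval))}
    {g} (hg : ∀ f ∈ C, f ≤ g) : chainSup C ≤ g := by
  intro v s
  apply sSup_le
  rintro x ⟨f, hf, rfl⟩
  exact hg f hf v s

lemma chainInf_le {n k : ℕ}
    {C : Set ((Fin k → Fin n → unitInterval) →o (Fin n → unitInterval))}
    {f} (hf : f ∈ C) : chainInf C ≤ f :=
  fun v s => sInf_le ⟨f, hf, rfl⟩

lemma le_chainInf {n k : ℕ}
    {C : Set ((Fin k → Fin n → unitInterval) →o (Fin n → unitInterval))}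
    {g} (hg : ∀ f ∈ C, g ≤ f) : g ≤ chainInf C := by
  intro v s
  apply le_sInf
  rintro x ⟨f, hf, rfl⟩
  exact hg f hf v s

lemma chainSup_near {n k : ℕ}
    {C : Set ((Fin k → Fin n → unitInterval) →o (Fin n → unitInterval))}
    (hne : C.Nonempty) (q : Fin k → Fin n → unitInterval) (s : Fin n)
    {ε : ℝ} (hε : 0 < ε) :
    ∃ f ∈ C, (chainSup C q s : ℝ) - ε ≤ (f q s : ℝ) := by
  by_contra hcon
  push_neg at hcon
  obtain ⟨f₀, hf₀⟩ := hne
  have h0 : (0:ℝ) ≤ (chainSup C q s : ℝ) - ε :=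
    le_trans (f₀ q s).2.1 (le_of_lt (hcon f₀ hf₀))
  have h1 : (chainSup C q s : ℝ) - ε ≤ 1 := by
    have := (chainSup C q s).2.2
    linarith
  have hle : chainSup C q s ≤ (⟨(chainSup C q s : ℝ) - ε, h0, h1⟩ : unitInterval) := by
    apply sSup_le
    rintro x ⟨f, hf, rfl⟩
    exact Subtype.coe_le_coe.mp (le_of_lt (hcon f hf))
  have := Subtype.coe_le_coe.mpr hle
  simp only [] at this
  linarith [this]

lemma chainInf_near {n k : ℕ}
    {C : Set ((Fin k → Fin n → unitInterval) →o (Fin n → unitInterval))}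
    (hne : C.Nonempty) (q : Fin k → Fin n → unitInterval) (s : Fin n)
    {ε : ℝ} (hε : 0 < ε) :
    ∃ f ∈ C, (f q s : ℝ) ≤ (chainInf C q s : ℝ) + ε := by
  by_contra hcon
  push_neg at hcon
  obtain ⟨f₀, hf₀⟩ := hne
  have h1 : (chainInf C q s : ℝ) + ε ≤ 1 :=
    le_trans (le_of_lt (hcon f₀ hf₀)) (f₀ q s).2.2
  have h0 : (0:ℝ) ≤ (chainInf C q s : ℝ) + ε := by
    have := (chainInf C q s).2.1
    linarith
  have hle : (⟨(chainInf C q s : ℝ) + ε, h0, h1⟩ : unitInterval) ≤ chainInf C q s := by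
    apply le_sInf
    rintro x ⟨f, hf, rfl⟩
    exact Subtype.coe_le_coe.mp (le_of_lt (hcon f hf))
  have := Subtype.coe_le_coe.mpr hle
  simp only [] at this
  linarith [this]

/-- A finite family of elements of a chain has an upper bound in the chain. -/
lemma chain_bound_above {α : Type*} [Preorder α] {C : Set α} (hC : IsChain (· ≤ ·) C)
    {ι : Type*} (g : ι → α) (hg : ∀ i, g i ∈ C) (l : List ι) {f₀ : α} (hf₀ : f₀ ∈ C) :
    ∃ b ∈ C, f₀ ≤ b ∧ ∀ i ∈ l, g i ≤ b := by
  induction l with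
  | nil => exact ⟨f₀, hf₀, le_rfl, by simp⟩
  | cons a l ih =>
    obtain ⟨b, hbC, hfb, hb⟩ := ih
    rcases hC.total hbC (hg a) with hle | hle
    · refine ⟨g a, hg a, hfb.trans hle, ?_⟩
      intro i hi
      rcases List.mem_cons.mp hi with rfl | hi
      · exact le_rfl
      · exact (hb i hi).trans hle
    · refine ⟨b, hbC, hfb, ?_⟩
      intro i hi
      rcases List.mem_cons.mp hi with rfl | hi
      · exact hle
      · exact hb i hi

lemma chain_bound_below {α : Type*} [Preorder α] {C : Set α} (hC : IsChain (· ≤ ·) C)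
    {ι : Type*} (g : ι → α) (hg : ∀ i, g i ∈ C) (l : List ι) {f₀ : α} (hf₀ : f₀ ∈ C) :
    ∃ b ∈ C, b ≤ f₀ ∧ ∀ i ∈ l, b ≤ g i := by
  induction l with
  | nil => exact ⟨f₀, hf₀, le_rfl, by simp⟩
  | cons a l ih =>
    obtain ⟨b, hbC, hfb, hb⟩ := ih
    rcases hC.total hbC (hg a) with hle | hle
    · refine ⟨b, hbC, hfb, ?_⟩
      intro i hi
      rcases List.mem_cons.mp hi with rfl | hi
      · exact hle
      · exact hb i hi
    · refine ⟨g a, hg a, hle.trans hfb, ?_⟩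
      intro i hi
      rcases List.mem_cons.mp hi with rfl | hi
      · exact le_rfl
      · exact hle.trans (hb i hi)

lemma mul_bound {x y v δ : ℝ} (h : x ≤ y + δ) (h0 : 0 ≤ v) (h1 : v ≤ 1) (hδ : 0 ≤ δ) :
    x * v ≤ y * v + δ := by nlinarith
lemma affine_chainSup {n k : ℕ} {Ts Us : Fin k → Set (Fin n)}
    (hdisj : ∀ j, Disjoint (Ts j) (Us j))
    {C : Set ((Fin k → Fin n → unitInterval) →o (Fin n → unitInterval))}
    (hC : IsChain (· ≤ ·) C) (hne : C.Nonempty)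
    (haff : ∀ f ∈ C, IsAffineOn Ts Us f) :
    IsAffineOn Ts Us (chainSup C) := by
  classical
  set F := chainSup C with hF
  refine ⟨fun s => (F (rbase Us) s : ℝ), fun s => dcl Ts Us F s, ?_⟩
  intro v hv s
  set A : ℝ := (F (rbase Us) s : ℝ) with hA
  set N : ℝ := (k * n : ℕ) + 1 with hN
  have hNpos : (0:ℝ) < N := by positivity
  have hvert_le : ∀ f ∈ C, ∀ j t, (f (rvert Us j t) s : ℝ) ≤ (F (rvert Us j t) s : ℝ) :=
    fun f hf j t => Subtype.coe_le_coe.mpr (le_chainSup hf (rvert Us j t) s)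
  have hbase_le : ∀ f ∈ C, (f (rbase Us) s : ℝ) ≤ A :=
    fun f hf => Subtype.coe_le_coe.mpr (le_chainSup hf (rbase Us) s)
  -- term-wise comparison of coefficients given a lower bound on the base value
  have hdcl_le : ∀ g ∈ C, ∀ δ : ℝ, 0 ≤ δ → A - δ ≤ (g (rbase Us) s : ℝ) →
      ∀ j t, dcl Ts Us g s j t ≤ dcl Ts Us F s j t + δ := by
    intro g hg δ hδ hgb j t
    by_cases hm : t ∈ Ts j ∪ Us j
    · rw [dcl, if_pos hm, dcl, if_pos hm]; linarith
    · rw [dcl, if_neg hm, dcl, if_neg hm]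
      have := hvert_le g hg j t
      linarith
  apply le_antisymm
  · -- F v s ≤ A + ∑∑ dcl F * v
    apply le_of_forall_sub_le
    intro ε hε
    set δ : ℝ := ε / N with hδdef
    have hδ : 0 < δ := by positivity
    obtain ⟨f₁, hf₁, hf₁v⟩ := chainSup_near hne v s hδ
    obtain ⟨g₀, hg₀, hg₀b⟩ := chainSup_near hne (rbase Us) s hδ
    obtain ⟨g, hgC, hg1, hgb⟩ : ∃ g ∈ C, f₁ ≤ g ∧ A - δ ≤ (g (rbase Us) s : ℝ) := by
      rcases hC.total hf₁ hg₀ with hle | hle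
      · exact ⟨g₀, hg₀, hle, hg₀b⟩
      · exact ⟨f₁, hf₁, le_rfl, le_trans hg₀b
          (Subtype.coe_le_coe.mpr (hle (rbase Us) s))⟩
    have hcan := affine_canonical hdisj (haff g hgC) v hv s
    have hterm : ∀ j t, dcl Ts Us g s j t * (v j t : ℝ)
        ≤ dcl Ts Us F s j t * (v j t : ℝ) + δ :=
      fun j t => mul_bound (hdcl_le g hgC δ hδ.le hgb j t) (v j t).2.1 (v j t).2.2 hδ.le
    have hsum : (∑ j, ∑ t, dcl Ts Us g s j t * (v j t : ℝ))
        ≤ (∑ j, ∑ t, dcl Ts Us F s j t * (v j t : ℝ)) + (k * n : ℕ) * δ := by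
      calc (∑ j, ∑ t, dcl Ts Us g s j t * (v j t : ℝ))
          ≤ ∑ j : Fin k, ∑ t : Fin n, (dcl Ts Us F s j t * (v j t : ℝ) + δ) :=
            Finset.sum_le_sum (fun j _ => Finset.sum_le_sum (fun t _ => hterm j t))
        _ = (∑ j, ∑ t, dcl Ts Us F s j t * (v j t : ℝ)) + (k * n : ℕ) * δ := by
            simp [Finset.sum_add_distrib, Finset.card_univ, mul_assoc]
    have hgv : (F v s : ℝ) - δ ≤ (g v s : ℝ) :=
      le_trans hf₁v (Subtype.coe_le_coe.mpr (hg1 v s))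
    have hNδ : N * δ = ε := by
      rw [hδdef]; field_simp
    have : (F v s : ℝ) ≤ A + (∑ j, ∑ t, dcl Ts Us F s j t * (v j t : ℝ)) + N * δ := by
      have hkn : ((k*n : ℕ) : ℝ) * δ + δ + δ ≤ N * δ + δ := by
        rw [hN]; ring_nf; nlinarith
      nlinarith [hgb, hcan, hsum, hgv, hbase_le g hgC]
    linarith [hNδ ▸ this]
  · -- A + ∑∑ dcl F * v ≤ F v s
    apply le_of_forall_sub_le
    intro ε hε
    set δ : ℝ := ε / N with hδdef
    have hδ : 0 < δ := by positivity
    obtain ⟨g₀, hg₀, hg₀b⟩ := chainSup_near hne (rbase Us) s hδ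
    have hach : ∀ p : Fin k × Fin n,
        ∃ f, f ∈ C ∧ (F (rvert Us p.1 p.2) s : ℝ) - δ ≤ (f (rvert Us p.1 p.2) s : ℝ) :=
      fun p => chainSup_near hne _ s hδ
    choose gf hgfC hgf using hach
    obtain ⟨g, hgC, hg0, hgall⟩ :=
      chain_bound_above hC gf hgfC (Finset.univ.toList) hg₀
    have hgb : A - δ ≤ (g (rbase Us) s : ℝ) :=
      le_trans hg₀b (Subtype.coe_le_coe.mpr (hg0 (rbase Us) s))
    have hterm : ∀ j t, dcl Ts Us F s j t * (v j t : ℝ)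
        ≤ dcl Ts Us g s j t * (v j t : ℝ) + δ := by
      intro j t
      refine mul_bound ?_ (v j t).2.1 (v j t).2.2 hδ.le
      by_cases hm : t ∈ Ts j ∪ Us j
      · rw [dcl, if_pos hm, dcl, if_pos hm]; linarith
      · rw [dcl, if_neg hm, dcl, if_neg hm]
        have h1 : (F (rvert Us j t) s : ℝ) - δ ≤ (g (rvert Us j t) s : ℝ) := by
          refine le_trans (hgf (j, t)) (Subtype.coe_le_coe.mpr ?_)
          exact (hgall (j, t) (Finset.mem_toList.mpr (Finset.mem_univ _))) (rvert Us j t) s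
        have h2 : (g (rbase Us) s : ℝ) ≤ A := hbase_le g hgC
        linarith
    have hsum : (∑ j, ∑ t, dcl Ts Us F s j t * (v j t : ℝ))
        ≤ (∑ j, ∑ t, dcl Ts Us g s j t * (v j t : ℝ)) + (k * n : ℕ) * δ := by
      calc (∑ j, ∑ t, dcl Ts Us F s j t * (v j t : ℝ))
          ≤ ∑ j : Fin k, ∑ t : Fin n, (dcl Ts Us g s j t * (v j t : ℝ) + δ) :=
            Finset.sum_le_sum (fun j _ => Finset.sum_le_sum (fun t _ => hterm j t))
        _ = (∑ j, ∑ t, dcl Ts Us g s j t * (v j t : ℝ)) + (k * n : ℕ) * δ := by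
            simp [Finset.sum_add_distrib, Finset.card_univ, mul_assoc]
    have hcan := affine_canonical hdisj (haff g hgC) v hv s
    have hgv : (g v s : ℝ) ≤ (F v s : ℝ) :=
      Subtype.coe_le_coe.mpr (le_chainSup hgC v s)
    have hNδ : N * δ = ε := by rw [hδdef]; field_simp
    have hkn : ((k*n : ℕ) : ℝ) * δ + δ ≤ N * δ := by rw [hN]; ring_nf; nlinarith
    nlinarith [hgb, hcan, hsum, hgv, hNδ]
lemma affine_chainInf {n k : ℕ} {Ts Us : Fin k → Set (Fin n)}
    (hdisj : ∀ j, Disjoint (Ts j) (Us j))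
    {C : Set ((Fin k → Fin n → unitInterval) →o (Fin n → unitInterval))}
    (hC : IsChain (· ≤ ·) C) (hne : C.Nonempty)
    (haff : ∀ f ∈ C, IsAffineOn Ts Us f) :
    IsAffineOn Ts Us (chainInf C) := by
  classical
  set F := chainInf C with hF
  refine ⟨fun s => (F (rbase Us) s : ℝ), fun s => dcl Ts Us F s, ?_⟩
  intro v hv s
  set A : ℝ := (F (rbase Us) s : ℝ) with hA
  set N : ℝ := (k * n : ℕ) + 1 with hN
  have hNpos : (0:ℝ) < N := by positivity
  have hvert_le : ∀ f ∈ C, ∀ j t, (F (rvert Us j t) s : ℝ) ≤ (f (rvert Us j t) s : ℝ) :=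
    fun f hf j t => Subtype.coe_le_coe.mpr (chainInf_le hf (rvert Us j t) s)
  have hbase_le : ∀ f ∈ C, A ≤ (f (rbase Us) s : ℝ) :=
    fun f hf => Subtype.coe_le_coe.mpr (chainInf_le hf (rbase Us) s)
  apply le_antisymm
  · -- F v s ≤ A + ∑∑ dcl F * v
    apply le_of_forall_sub_le
    intro ε hε
    set δ : ℝ := ε / N with hδdef
    have hδ : 0 < δ := by positivity
    obtain ⟨g₀, hg₀, hg₀b⟩ := chainInf_near hne (rbase Us) s hδ
    have hach : ∀ p : Fin k × Fin n,
        ∃ f, f ∈ C ∧ (f (rvert Us p.1 p.2) s : ℝ) ≤ (F (rvert Us p.1 p.2) s : ℝ) + δ :=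
      fun p => chainInf_near hne _ s hδ
    choose gf hgfC hgf using hach
    obtain ⟨g, hgC, hg0, hgall⟩ :=
      chain_bound_below hC gf hgfC (Finset.univ.toList) hg₀
    have hgb : (g (rbase Us) s : ℝ) ≤ A + δ :=
      le_trans (Subtype.coe_le_coe.mpr (hg0 (rbase Us) s)) hg₀b
    have hterm : ∀ j t, dcl Ts Us g s j t * (v j t : ℝ)
        ≤ dcl Ts Us F s j t * (v j t : ℝ) + δ := by
      intro j t
      refine mul_bound ?_ (v j t).2.1 (v j t).2.2 hδ.le
      by_cases hm : t ∈ Ts j ∪ Us j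
      · rw [dcl, if_pos hm, dcl, if_pos hm]; linarith
      · rw [dcl, if_neg hm, dcl, if_neg hm]
        have h1 : (g (rvert Us j t) s : ℝ) ≤ (F (rvert Us j t) s : ℝ) + δ := by
          refine le_trans (Subtype.coe_le_coe.mpr ?_) (hgf (j, t))
          exact (hgall (j, t) (Finset.mem_toList.mpr (Finset.mem_univ _))) (rvert Us j t) s
        have h2 : A ≤ (g (rbase Us) s : ℝ) := hbase_le g hgC
        linarith
    have hsum : (∑ j, ∑ t, dcl Ts Us g s j t * (v j t : ℝ))
        ≤ (∑ j, ∑ t, dcl Ts Us F s j t * (v j t : ℝ)) + (k * n : ℕ) * δ := by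
      calc (∑ j, ∑ t, dcl Ts Us g s j t * (v j t : ℝ))
          ≤ ∑ j : Fin k, ∑ t : Fin n, (dcl Ts Us F s j t * (v j t : ℝ) + δ) :=
            Finset.sum_le_sum (fun j _ => Finset.sum_le_sum (fun t _ => hterm j t))
        _ = (∑ j, ∑ t, dcl Ts Us F s j t * (v j t : ℝ)) + (k * n : ℕ) * δ := by
            simp [Finset.sum_add_distrib, Finset.card_univ, mul_assoc]
    have hcan := affine_canonical hdisj (haff g hgC) v hv s
    have hgv : (F v s : ℝ) ≤ (g v s : ℝ) :=
      Subtype.coe_le_coe.mpr (chainInf_le hgC v s)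
    have hNδ : N * δ = ε := by rw [hδdef]; field_simp
    have hkn : ((k*n : ℕ) : ℝ) * δ + δ ≤ N * δ := by rw [hN]; ring_nf; nlinarith
    nlinarith [hgb, hcan, hsum, hgv, hNδ]
  · -- A + ∑∑ dcl F * v ≤ F v s
    apply le_of_forall_sub_le
    intro ε hε
    set δ : ℝ := ε / N with hδdef
    have hδ : 0 < δ := by positivity
    obtain ⟨g₀, hg₀, hg₀b⟩ := chainInf_near hne (rbase Us) s hδ
    -- it suffices to bound every member of the chain from below
    have hforall : ∀ f ∈ C,
        A + (∑ j, ∑ t, dcl Ts Us F s j t * (v j t : ℝ)) - ε ≤ (f v s : ℝ) := by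
      intro f hf
      obtain ⟨g, hgC, hgf, hgb'⟩ : ∃ g ∈ C, g ≤ f ∧ (g (rbase Us) s : ℝ) ≤ A + δ := by
        rcases hC.total hf hg₀ with hle | hle
        · exact ⟨f, hf, le_rfl, le_trans (Subtype.coe_le_coe.mpr (hle (rbase Us) s)) hg₀b⟩
        · exact ⟨g₀, hg₀, hle, hg₀b⟩
      have hterm : ∀ j t, dcl Ts Us F s j t * (v j t : ℝ)
          ≤ dcl Ts Us g s j t * (v j t : ℝ) + δ := by
        intro j t
        refine mul_bound ?_ (v j t).2.1 (v j t).2.2 hδ.le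
        by_cases hm : t ∈ Ts j ∪ Us j
        · rw [dcl, if_pos hm, dcl, if_pos hm]; linarith
        · rw [dcl, if_neg hm, dcl, if_neg hm]
          have h1 := hvert_le g hgC j t
          linarith
      have hsum : (∑ j, ∑ t, dcl Ts Us F s j t * (v j t : ℝ))
          ≤ (∑ j, ∑ t, dcl Ts Us g s j t * (v j t : ℝ)) + (k * n : ℕ) * δ := by
        calc (∑ j, ∑ t, dcl Ts Us F s j t * (v j t : ℝ))
            ≤ ∑ j : Fin k, ∑ t : Fin n, (dcl Ts Us g s j t * (v j t : ℝ) + δ) :=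
              Finset.sum_le_sum (fun j _ => Finset.sum_le_sum (fun t _ => hterm j t))
          _ = (∑ j, ∑ t, dcl Ts Us g s j t * (v j t : ℝ)) + (k * n : ℕ) * δ := by
              simp [Finset.sum_add_distrib, Finset.card_univ, mul_assoc]
      have hcan := affine_canonical hdisj (haff g hgC) v hv s
      have hgv : (g v s : ℝ) ≤ (f v s : ℝ) := Subtype.coe_le_coe.mpr (hgf v s)
      have hgb2 : A ≤ (g (rbase Us) s : ℝ) := hbase_le g hgC
      have hNδ : N * δ = ε := by rw [hδdef]; field_simp
      have hkn : ((k*n : ℕ) : ℝ) * δ + δ ≤ N * δ := by rw [hN]; ring_nf; nlinarith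
      nlinarith [hgb', hcan, hsum, hgv, hNδ]
    -- now pass to the infimum
    have : (⟨max 0 (A + (∑ j, ∑ t, dcl Ts Us F s j t * (v j t : ℝ)) - ε), by
          constructor
          · exact le_max_left _ _
          · rcases hne with ⟨f₀, hf₀⟩
            have := hforall f₀ hf₀
            have h1 := (f₀ v s).2.2
            apply max_le (by norm_num) (by linarith)⟩ : unitInterval)
        ≤ F v s := by
      apply le_sInf
      rintro x ⟨f, hf, rfl⟩
      apply Subtype.coe_le_coe.mp
      exact max_le (f v s).2.1 (hforall f hf)
    have h2 := Subtype.coe_le_coe.mpr this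
    simp only [] at h2
    have h3 := le_max_right (0:ℝ) (A + (∑ j, ∑ t, dcl Ts Us F s j t * (v j t : ℝ)) - ε)
    linarith
/-- Zorn's lemma for minimal elements. -/
lemma zorn_min {α : Type*} [Preorder α] (s : Set α)
    (ih : ∀ c ⊆ s, IsChain (· ≤ ·) c → ∃ lb ∈ s, ∀ z ∈ c, lb ≤ z) :
    ∃ m ∈ s, ∀ y ∈ s, y ≤ m → m ≤ y := by
  obtain ⟨m, hm⟩ := zorn_le₀ (α := αᵒᵈ) s (fun c hcs hc => by
    obtain ⟨lb, hlb, h2⟩ := ih c hcs hc.symm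
    exact ⟨lb, hlb, fun z hz => h2 z hz⟩)
  exact ⟨m, hm.1, fun y hy hyx => hm.2 hy hyx⟩

theorem refined_lfp_gfp_mem' {n k : ℕ} (hn : 1 ≤ n)
    (Ts Us : Fin k → Set (Fin n)) (T U : Set (Fin n))
    (hdisj : ∀ j, Disjoint (Ts j) (Us j)) (hTU : Disjoint T U)
    (h : ((Fin k → Fin n → unitInterval) →o (Fin n → unitInterval)) →
      ((Fin k → Fin n → unitInterval) →o (Fin n → unitInterval)))
    (hmono : Monotone h)
    (hmem : ∀ x, InRefined Ts Us T U x → InRefined Ts Us T U (h x)) :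
    (U = ∅ → ∀ LF, IsLeast {x | h x = x} LF → InRefined Ts Us T U LF)
    ∧ (T = ∅ → ∀ GF, IsGreatest {x | h x = x} GF → InRefined Ts Us T U GF) := by
  constructor
  · -- least fixed point
    intro hU LF hLF
    set P : Set ((Fin k → Fin n → unitInterval) →o (Fin n → unitInterval)) :=
      {x | InRefined Ts Us T U x ∧ x ≤ LF ∧ x ≤ h x} with hP
    have hbot : (⟨fun _ _ => 0, fun _ _ _ _ => le_rfl⟩ :
        (Fin k → Fin n → unitInterval) →o (Fin n → unitInterval)) ∈ P := by
      refine ⟨⟨⟨fun _ => 0, fun _ _ _ => 0, by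
        intro v hv s
        simp; rfl⟩, ?_⟩, fun v s => unitInterval.nonneg', fun v s => unitInterval.nonneg'⟩
      intro v hv
      exact ⟨fun s _ => rfl, fun s hs => by rw [hU] at hs; exact absurd hs (Set.notMem_empty s)⟩
    obtain ⟨m, hm⟩ := zorn_le₀ P (fun c hcP hchain => by
      rcases c.eq_empty_or_nonempty with rfl | hne
      · exact ⟨_, hbot, fun z hz => absurd hz (Set.notMem_empty z)⟩
      · refine ⟨chainSup c, ⟨⟨affine_chainSup hdisj hchain hne
          (fun f hf => (hcP hf).1.1), ?_⟩, ?_, ?_⟩, fun f hf => le_chainSup hf⟩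
        · -- maps the domain into D(T,U)
          intro v hv
          constructor
          · intro s hs
            apply le_antisymm _ unitInterval.nonneg'
            apply sSup_le
            rintro x ⟨f, hf, rfl⟩
            exact le_of_eq (((hcP hf).1.2 v hv).1 s hs)
          · intro s hs
            rw [hU] at hs; exact absurd hs (Set.notMem_empty s)
        · exact chainSup_le (fun f hf => (hcP hf).2.1)
        · apply chainSup_le
          intro f hf
          exact le_trans (hcP hf).2.2 (hmono (le_chainSup hf)))
    have hmax : ∀ y ∈ P, m ≤ y → y ≤ m := fun y hy hxy => hm.2 hy hxy
    obtain ⟨hmR, hmLF, hmh⟩ := hm.1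
    have hhm : h m ∈ P := by
      refine ⟨hmem m hmR, ?_, hmono hmh⟩
      calc h m ≤ h LF := hmono hmLF
        _ = LF := hLF.1
    have hfix : h m = m := le_antisymm (hmax _ hhm hmh) hmh
    have : m = LF := le_antisymm hmLF (hLF.2 hfix)
    exact this ▸ hmR
  · -- greatest fixed point
    intro hT GF hGF
    set P : Set ((Fin k → Fin n → unitInterval) →o (Fin n → unitInterval)) :=
      {x | InRefined Ts Us T U x ∧ GF ≤ x ∧ h x ≤ x} with hP
    have htop : (⟨fun _ _ => 1, fun _ _ _ _ => le_rfl⟩ :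
        (Fin k → Fin n → unitInterval) →o (Fin n → unitInterval)) ∈ P := by
      refine ⟨⟨⟨fun _ => 1, fun _ _ _ => 0, by
        intro v hv s
        simp; rfl⟩, ?_⟩, fun v s => unitInterval.le_one', fun v s => unitInterval.le_one'⟩
      intro v hv
      exact ⟨fun s hs => by rw [hT] at hs; exact absurd hs (Set.notMem_empty s),
        fun s _ => rfl⟩
    obtain ⟨m, hmP, hmin⟩ := zorn_min P (fun c hcP hchain => by
      rcases c.eq_empty_or_nonempty with rfl | hne
      · exact ⟨_, htop, fun z hz => absurd hz (Set.notMem_empty z)⟩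
      · refine ⟨chainInf c, ⟨⟨affine_chainInf hdisj hchain hne
          (fun f hf => (hcP hf).1.1), ?_⟩, ?_, ?_⟩, fun f hf => chainInf_le hf⟩
        · intro v hv
          constructor
          · intro s hs
            rw [hT] at hs; exact absurd hs (Set.notMem_empty s)
          · intro s hs
            apply le_antisymm unitInterval.le_one'
            apply le_sInf
            rintro x ⟨f, hf, rfl⟩
            exact le_of_eq (((hcP hf).1.2 v hv).2 s hs).symm
        · exact le_chainInf (fun f hf => (hcP hf).2.1)
        · apply le_chainInf
          intro f hf
          exact le_trans (hmono (chainInf_le hf)) (hcP hf).2.2)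
    obtain ⟨hmR, hmGF, hmh⟩ := hmP
    have hhm : h m ∈ P := by
      refine ⟨hmem m hmR, ?_, hmono hmh⟩
      calc GF = h GF := hGF.1.symm
        _ ≤ h m := hmono hmGF
    have hfix : h m = m := le_antisymm hmh (hmin _ hhm hmh)
    have : m = GF := le_antisymm (hGF.2 hfix) hmGF
    exact this ▸ hmR


/-- if `h` is a monotone self-map of the complete lattice
`⟦tr(κ)⟧` that maps `⟦κ⟧` into `⟦κ⟧`, then: if `U = ∅`, the least fixed point
of `h` (given by the Knaster–Tarski theorem) belongs to `⟦κ⟧`; dually, if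
`T = ∅`, the greatest fixed point of `h` belongs to `⟦κ⟧`. -/
theorem refined_lfp_gfp_mem {n k : ℕ} (hn : 1 ≤ n)
    (Ts Us : Fin k → Set (Fin n)) (T U : Set (Fin n))
    (hdisj : ∀ j, Disjoint (Ts j) (Us j)) (hTU : Disjoint T U)
    (h : ((Fin k → Fin n → unitInterval) →o (Fin n → unitInterval)) →
      ((Fin k → Fin n → unitInterval) →o (Fin n → unitInterval)))
    (hmono : Monotone h)
    (hmem : ∀ x, InRefined Ts Us T U x → InRefined Ts Us T U (h x)) :
    (U = ∅ → ∀ LF, IsLeast {x | h x = x} LF → InRefined Ts Us T U LF)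
    ∧ (T = ∅ → ∀ GF, IsGreatest {x | h x = x} GF → InRefined Ts Us T U GF) :=
  refined_lfp_gfp_mem' hn Ts Us T U hdisj hTU h hmono hmem
end

section
/- Fix a refined type κ = (T₁,U₁) → ⋯ → (T_k,U_k) → (T,U) over S = {1,…,n}, and let h₀ and h₁ be monotone functions from ⟦tr(κ)⟧ to itself such that: (i) h₀(x), h₁(x) ∈ ⟦κ⟧ for every x ∈ ⟦κ⟧, and (ii) for all x₀, x₁ ∈ ⟦tr(κ)⟧, x₀ ≾_κ x₁ implies h₀(x₀) ≾_κ h₁(x₁). If U = ∅ then lfp(h₀) ≾_κ lfp(h₁); dually, if T = ∅ then gfp(h₀) ≾_κ gfp(h₁), where lfp and gfp are taken in ⟦tr(κ)⟧. -/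
open Finset

/-- `f ≾_κ g`: `f(v₁,…,v_k) ≤ g(v₁,…,v_k)` pointwise for all tuples in
`D(T₁,U₁) × ⋯ × D(T_k,U_k)`. -/
def PrecSim {n k : ℕ} (Ts Us : Fin k → Set (Fin n))
    (f g : (Fin k → Fin n → unitInterval) →o (Fin n → unitInterval)) : Prop :=
  ∀ v, InDom Ts Us v → f v ≤ g v

/-- let `h₀, h₁` be monotone self-maps of `⟦tr(κ)⟧` mapping
`⟦κ⟧` into `⟦κ⟧` such that `x₀ ≾_κ x₁` implies `h₀(x₀) ≾_κ h₁(x₁)`.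
If `U = ∅` then `lfp(h₀) ≾_κ lfp(h₁)`; dually, if `T = ∅` then
`gfp(h₀) ≾_κ gfp(h₁)` (lfp and gfp taken in `⟦tr(κ)⟧`, via Knaster–Tarski). -/
theorem refined_lfp_gfp_precsim {n k : ℕ} (hn : 1 ≤ n)
    (Ts Us : Fin k → Set (Fin n)) (T U : Set (Fin n))
    (hdisj : ∀ j, Disjoint (Ts j) (Us j)) (hTU : Disjoint T U)
    (h₀ h₁ : ((Fin k → Fin n → unitInterval) →o (Fin n → unitInterval)) →
      ((Fin k → Fin n → unitInterval) →o (Fin n → unitInterval)))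
    (hmono₀ : Monotone h₀) (hmono₁ : Monotone h₁)
    (hmem : ∀ x, InRefined Ts Us T U x →
      InRefined Ts Us T U (h₀ x) ∧ InRefined Ts Us T U (h₁ x))
    (hord : ∀ x₀ x₁, PrecSim Ts Us x₀ x₁ → PrecSim Ts Us (h₀ x₀) (h₁ x₁)) :
    (U = ∅ → ∀ LF₀ LF₁, IsLeast {x | h₀ x = x} LF₀ → IsLeast {x | h₁ x = x} LF₁ →
      PrecSim Ts Us LF₀ LF₁)
    ∧ (T = ∅ → ∀ GF₀ GF₁, IsGreatest {x | h₀ x = x} GF₀ →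
      IsGreatest {x | h₁ x = x} GF₁ → PrecSim Ts Us GF₀ GF₁) := by
  constructor
  · intro _ LF₀ LF₁ hLF₀ hLF₁
    let p : (Fin k → Fin n → unitInterval) →o (Fin n → unitInterval) := ⟨fun v s => ⨅ w : {w // InDom Ts Us w ∧ v ≤ w}, LF₁ w s, by
      intro a b hab s
      exact le_iInf fun w => iInf_le_of_le ⟨w, w.2.1, le_trans hab w.2.2⟩ le_rfl⟩
    have hpLF : ∀ w, InDom Ts Us w → p w ≤ LF₁ w := by
      intro w hw s
      exact iInf_le (fun (x : {x // InDom Ts Us x ∧ w ≤ x}) => LF₁ x s)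
        ⟨w, hw, le_rfl⟩
    have hpre : h₀ p ≤ p := by
      intro v s
      refine le_iInf fun w => ?_
      have h1 : h₀ p v s ≤ h₀ p w s := (h₀ p).monotone w.2.2 s
      have h2 : h₀ p w ≤ h₁ LF₁ w := hord p LF₁ hpLF w w.2.1
      calc h₀ p v s ≤ h₀ p w s := h1
        _ ≤ h₁ LF₁ w s := h2 s
        _ = LF₁ w s := by rw [hLF₁.1]
    have hlfP : LF₀ ≤ p := by
      have hfix : h₀ (OrderHom.lfp ⟨h₀, hmono₀⟩) = OrderHom.lfp ⟨h₀, hmono₀⟩ :=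
        OrderHom.map_lfp (⟨h₀, hmono₀⟩ )
      exact le_trans (hLF₀.2 hfix)
        (OrderHom.lfp_le (⟨h₀, hmono₀⟩ ) hpre)
    intro v hv
    exact le_trans (hlfP v) (hpLF v hv)
  · intro _ GF₀ GF₁ hGF₀ hGF₁
    let q : (Fin k → Fin n → unitInterval) →o (Fin n → unitInterval) := ⟨fun v s => ⨆ w : {w // InDom Ts Us w ∧ w ≤ v}, GF₀ w s, by
      intro a b hab s
      exact iSup_le fun w => le_iSup_of_le ⟨w, w.2.1, le_trans w.2.2 hab⟩ le_rfl⟩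
    have hGFq : ∀ w, InDom Ts Us w → GF₀ w ≤ q w := by
      intro w hw s
      exact le_iSup (fun (x : {x // InDom Ts Us x ∧ x ≤ w}) => GF₀ x s)
        ⟨w, hw, le_rfl⟩
    have hpost : q ≤ h₁ q := by
      intro v s
      refine iSup_le fun w => ?_
      have h2 : h₀ GF₀ w ≤ h₁ q w := hord GF₀ q hGFq w w.2.1
      calc GF₀ w s = h₀ GF₀ w s := by rw [hGF₀.1]
        _ ≤ h₁ q w s := h2 s
        _ ≤ h₁ q v s := (h₁ q).monotone w.2.2 s
    have hqG : q ≤ GF₁ := by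
      have hfix : h₁ (OrderHom.gfp ⟨h₁, hmono₁⟩) = OrderHom.gfp ⟨h₁, hmono₁⟩ :=
        OrderHom.map_gfp (⟨h₁, hmono₁⟩ )
      exact le_trans (OrderHom.le_gfp (⟨h₁, hmono₁⟩ ) hpost)
        (hGF₁.2 hfix)
    intro v hv
    exact le_trans (hGFq v hv) (hqG v)
end

section
/- Fix a refined type κ = (T₁,U₁) → ⋯ → (T_k,U_k) → (T,U) over S = {1,…,n}, and let h be a monotone function from ⟦tr(κ)⟧ to itself such that h(x) ∈ ⟦κ⟧ for every x ∈ ⟦κ⟧ and such that x ≾_κ x' implies h(x) ≾_κ h(x') for all x, x' ∈ ⟦tr(κ)⟧. If lfp(h) ∈ ⟦κ⟧, then lfp(h) is a ≾_κ-least element of the set { x ∈ ⟦κ⟧ | h(x) ≾_κ x }; that is, h(lfp(h)) ≾_κ lfp(h) and lfp(h) ≾_κ x for every x ∈ ⟦κ⟧ with h(x) ≾_κ x. Dually, if gfp(h) ∈ ⟦κ⟧, then gfp(h) is a ≾_κ-greatest element of { x ∈ ⟦κ⟧ | x ≾_κ h(x) }. -/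
open Finset

/-- let `h` be a monotone self-map of `⟦tr(κ)⟧` mapping `⟦κ⟧`
into `⟦κ⟧` and preserving `≾_κ`.  If `lfp(h) ∈ ⟦κ⟧`, then `lfp(h)` is a
`≾_κ`-least element of `{ x ∈ ⟦κ⟧ | h(x) ≾_κ x }`; dually, if `gfp(h) ∈ ⟦κ⟧`,
then `gfp(h)` is a `≾_κ`-greatest element of `{ x ∈ ⟦κ⟧ | x ≾_κ h(x) }`. -/
theorem refined_lfp_least_prefixpoint {n k : ℕ} (hn : 1 ≤ n)
    (Ts Us : Fin k → Set (Fin n)) (T U : Set (Fin n))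
    (hdisj : ∀ j, Disjoint (Ts j) (Us j)) (hTU : Disjoint T U)
    (h : ((Fin k → Fin n → unitInterval) →o (Fin n → unitInterval)) →
      ((Fin k → Fin n → unitInterval) →o (Fin n → unitInterval)))
    (hmono : Monotone h)
    (hmem : ∀ x, InRefined Ts Us T U x → InRefined Ts Us T U (h x))
    (hord : ∀ x x', PrecSim Ts Us x x' → PrecSim Ts Us (h x) (h x')) :
    (∀ LF, IsLeast {x | h x = x} LF → InRefined Ts Us T U LF →
      PrecSim Ts Us (h LF) LF ∧
        ∀ x, InRefined Ts Us T U x → PrecSim Ts Us (h x) x → PrecSim Ts Us LF x)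
    ∧ (∀ GF, IsGreatest {x | h x = x} GF → InRefined Ts Us T U GF →
      PrecSim Ts Us GF (h GF) ∧
        ∀ x, InRefined Ts Us T U x → PrecSim Ts Us x (h x) → PrecSim Ts Us x GF) := by
  constructor
  · intro LF hLF hLFmem
    have hfix : h LF = LF := hLF.1
    constructor
    · intro v hv; rw [hfix]
    · intro x hx hpre
      set A : Set ((Fin k → Fin n → unitInterval) →o (Fin n → unitInterval)) :=
        {y | y ≤ LF ∧ PrecSim Ts Us y x ∧ y ≤ h y} with hA
      set z := sSup A with hz
      have hzLF : z ≤ LF := sSup_le (fun y (hy : y ∈ A) => hy.1)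
      have hzx : PrecSim Ts Us z x := by
        intro v hv
        rw [hz, OrderHom.sSup_apply]
        exact iSup₂_le (fun y (hy : y ∈ A) => hy.2.1 v hv)
      have hzhz : z ≤ h z :=
        sSup_le (fun y (hy : y ∈ A) => le_trans hy.2.2 (hmono (le_sSup hy)))
      have hhzA : h z ∈ A := by
        refine ⟨le_trans (hmono hzLF) (le_of_eq hfix), ?_, hmono hzhz⟩
        intro v hv
        exact le_trans (hord z x hzx v hv) (hpre v hv)
      have hzfix : h z = z := le_antisymm (le_sSup hhzA) hzhz
      have : LF ≤ z := hLF.2 hzfix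
      have hzeq : z = LF := le_antisymm hzLF this
      intro v hv
      exact hzeq ▸ hzx v hv
  · intro GF hGF hGFmem
    have hfix : h GF = GF := hGF.1
    constructor
    · intro v hv; rw [hfix]
    · intro x hx hpre
      set A : Set ((Fin k → Fin n → unitInterval) →o (Fin n → unitInterval)) :=
        {y | GF ≤ y ∧ PrecSim Ts Us x y ∧ h y ≤ y} with hA
      set z := sInf A with hz
      have hzGF : GF ≤ z := le_sInf (fun y (hy : y ∈ A) => hy.1)
      have hzx : PrecSim Ts Us x z := by
        intro v hv
        rw [hz, OrderHom.sInf_apply]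
        exact le_iInf₂ (fun y (hy : y ∈ A) => hy.2.1 v hv)
      have hzhz : h z ≤ z :=
        le_sInf (fun y (hy : y ∈ A) => le_trans (hmono (sInf_le hy)) hy.2.2)
      have hhzA : h z ∈ A := by
        refine ⟨le_trans (le_of_eq hfix.symm) (hmono hzGF), ?_, hmono hzhz⟩
        intro v hv
        exact le_trans (hpre v hv) (hord x z hzx v hv)
      have hzfix : h z = z := le_antisymm hzhz (sInf_le hhzA)
      have : z ≤ GF := hGF.2 hzfix
      have hzeq : z = GF := le_antisymm this hzGF
      intro v hv
      exact hzeq ▸ hzx v hv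
end

section
/- Fix a refined type κ = (T₁,U₁) → ⋯ → (T_k,U_k) → (T,U) over S = {1,…,n}. For every f ∈ ⟦κ⟧ there exists a coefficient tuple c = (c_{i,j,t}) ∈ M⟦κ⟧, i.e. with all c_{i,j,t} ∈ [0,1] and Σ_{j=0}^{k} Σ_{t∈{0}∪S} c_{i,j,t} ≤ 1 for each i ∈ S, such that f ∼_κ ⟨c⟩, i.e. f(v₁,…,v_k)(i) = c_{i,0,0} + Σ_{j=1}^{k} Σ_{t∈S} c_{i,j,t}·v_j(t) for all (v₁,…,v_k) ∈ D(T₁,U₁)×⋯×D(T_k,U_k) and all i ∈ S. -/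
open Finset

/-- `M⟦κ⟧`: coefficient tuples `c = (c_{i,j,t})` with `i ∈ S`, `j ∈ {0,…,k}`,
`t ∈ {0}∪S`, all entries in `[0,1]`, whose rows sum to at most `1`. -/
def InMKappa {n k : ℕ} (c : Fin n → Fin (k + 1) → Fin (n + 1) → ℝ) : Prop :=
  (∀ i j t, c i j t ∈ Set.Icc (0 : ℝ) 1) ∧ ∀ i, ∑ j, ∑ t, c i j t ≤ 1

/-- The function `⟨c⟩` associated with a coefficient tuple `c`:
`⟨c⟩(v₁,…,v_k)(i) = c_{i,0,0} + Σ_{j=1}^k Σ_{t∈S} c_{i,j,t}·v_j(t)`. -/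
def coefApply {n k : ℕ} (c : Fin n → Fin (k + 1) → Fin (n + 1) → ℝ)
    (v : Fin k → Fin n → unitInterval) (i : Fin n) : ℝ :=
  c i 0 0 + ∑ j : Fin k, ∑ t : Fin n, c i j.succ t.succ * (v j t : ℝ)

/-- every `f ∈ ⟦κ⟧` is `∼_κ`-equivalent to the function `⟨c⟩`
of some coefficient tuple `c ∈ M⟦κ⟧`, i.e. `f` and `⟨c⟩` agree on
`D(T₁,U₁) × ⋯ × D(T_k,U_k)`. -/
theorem refined_has_coef_representation {n k : ℕ} (hn : 1 ≤ n)
    (Ts Us : Fin k → Set (Fin n)) (T U : Set (Fin n))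
    (hdisj : ∀ j, Disjoint (Ts j) (Us j)) (hTU : Disjoint T U)
    (f : (Fin k → Fin n → unitInterval) →o (Fin n → unitInterval))
    (hf : InRefined Ts Us T U f) :
    ∃ c : Fin n → Fin (k + 1) → Fin (n + 1) → ℝ,
      InMKappa c ∧
        ∀ v, InDom Ts Us v → ∀ i, (f v i : ℝ) = coefApply c v i := by
  classical
  obtain ⟨⟨c0, a, haff⟩, _hmap⟩ := hf
  -- base point: 1 on U_j, 0 elsewhere
  set b : Fin k → Fin n → unitInterval := fun j t => if t ∈ Us j then 1 else 0 with hbdef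
  have hbdom : InDom Ts Us b := by
    intro j
    refine ⟨fun s hs => ?_, fun s hs => ?_⟩
    · simp only [hbdef]
      rw [if_neg (Set.disjoint_left.mp (hdisj j) hs)]
    · simp [hbdef, hs]
  -- bumped points
  set e : Fin k → Fin n → Fin k → Fin n → unitInterval :=
    fun j t j' t' => if j' = j ∧ t' = t ∧ t ∉ Ts j then 1 else b j' t' with hedef
  have hble : ∀ j t, b ≤ e j t := by
    intro j t j' t'
    simp only [hedef]
    split
    · exact unitInterval.le_one'
    · exact le_rfl
  have hedom : ∀ j t, InDom Ts Us (e j t) := by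
    intro j t j'
    refine ⟨fun s hs => ?_, fun s hs => ?_⟩
    · simp only [hedef]
      rw [if_neg]
      · exact (hbdom j').1 s hs
      · rintro ⟨rfl, rfl, ht⟩; exact ht hs
    · simp only [hedef]
      split
      · rfl
      · exact (hbdom j').2 s hs
  -- top point
  set w : Fin k → Fin n → unitInterval := fun j t => if t ∈ Ts j then 0 else 1 with hwdef
  have hwdom : InDom Ts Us w := by
    intro j
    refine ⟨fun s hs => ?_, fun s hs => ?_⟩
    · simp [hwdef, hs]
    · simp only [hwdef]
      rw [if_neg (Set.disjoint_right.mp (hdisj j) hs)]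
  -- the difference coefficients
  set d : Fin n → Fin k → Fin n → ℝ :=
    fun i j t => (f (e j t) i : ℝ) - (f b i : ℝ) with hddef
  have hd0 : ∀ i j t, 0 ≤ d i j t := by
    intro i j t
    exact sub_nonneg.mpr (Subtype.coe_le_coe.mpr (f.mono (hble j t) i))
  have hd1 : ∀ i j t, d i j t ≤ 1 := by
    intro i j t
    have h1 : (f (e j t) i : ℝ) ≤ 1 := (f (e j t) i).2.2
    have h2 : (0 : ℝ) ≤ (f b i : ℝ) := (f b i).2.1
    simp only [hddef]; linarith
  have heb : ∀ j t, t ∈ Ts j ∨ t ∈ Us j → e j t = b := by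
    intro j t ht
    funext j' t'
    simp only [hedef]
    split
    · next h =>
        obtain ⟨rfl, rfl, hnt⟩ := h
        rcases ht with h | h
        · exact absurd h hnt
        · simp [hbdef, h]
    · rfl
  have hda : ∀ i j t, t ∉ Ts j → t ∉ Us j → d i j t = a i j t := by
    intro i j t ht1 ht2
    have h1 := haff (e j t) (hedom j t) i
    have h2 := haff b hbdom i
    simp only [hddef]
    rw [h1, h2, add_sub_add_left_eq_sub, ← Finset.sum_sub_distrib]
    have hterm : ∀ j' t', a i j' t' * ((e j t j' t' : ℝ)) - a i j' t' * ((b j' t' : ℝ))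
        = if j' = j then (if t' = t then a i j t else 0) else 0 := by
      intro j' t'
      by_cases hj : j' = j
      · subst hj
        by_cases htt : t' = t
        · subst htt
          simp [hedef, hbdef, ht1, ht2]
        · rw [if_pos rfl, if_neg htt]
          simp only [hedef]
          rw [if_neg (fun h => htt h.2.1)]
          ring
      · rw [if_neg hj]
        simp only [hedef]
        rw [if_neg (fun h => hj h.1)]
        ring
    have : ∀ j' ∈ Finset.univ, (∑ t', a i j' t' * ((e j t j' t' : ℝ)))
        - (∑ t', a i j' t' * ((b j' t' : ℝ)))
        = if j' = j then a i j t else 0 := by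
      intro j' _
      rw [← Finset.sum_sub_distrib]
      rw [Finset.sum_congr rfl (fun t' _ => hterm j' t')]
      by_cases hj : j' = j <;> simp [hj]
    rw [Finset.sum_congr rfl this]
    simp
  -- the key identity
  have key : ∀ v, InDom Ts Us v → ∀ i,
      (f v i : ℝ) = (f b i : ℝ) + ∑ j, ∑ t, d i j t * ((v j t : ℝ)) := by
    intro v hv i
    rw [haff v hv i, haff b hbdom i]
    have hterm : ∀ j t, d i j t * ((v j t : ℝ))
        = a i j t * ((v j t : ℝ)) - a i j t * ((b j t : ℝ)) := by
      intro j t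
      by_cases h1 : t ∈ Ts j
      · have hv0 : v j t = 0 := (hv j).1 t h1
        have hb0 : b j t = 0 := (hbdom j).1 t h1
        simp [hv0, hb0]
      · by_cases h2 : t ∈ Us j
        · have hv1 : v j t = 1 := (hv j).2 t h2
          have hb1 : b j t = 1 := (hbdom j).2 t h2
          have hd : d i j t = 0 := by simp [hddef, heb j t (Or.inr h2)]
          simp [hv1, hb1, hd]
        · rw [hda i j t h1 h2]
          have hb0 : b j t = 0 := by simp [hbdef, h2]
          simp [hb0]
    simp only [hterm, Finset.sum_sub_distrib]
    ring
  -- the coefficient tuple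
  refine ⟨fun i => Fin.cons (Fin.cons ((f b i : ℝ)) 0) (fun j => Fin.cons 0 (fun t => d i j t)),
    ⟨?_, ?_⟩, ?_⟩
  · intro i j t
    refine Fin.cases ?_ (fun j' => ?_) j
    · refine Fin.cases ?_ (fun t' => ?_) t
      · simp
      · simp
    · refine Fin.cases ?_ (fun t' => ?_) t
      · simp
      · simpa using And.intro (hd0 i j' t') (hd1 i j' t')
  · intro i
    have hw := key w hwdom i
    have hsum : ∑ j, ∑ t, d i j t * ((w j t : ℝ)) = ∑ j, ∑ t, d i j t := by
      refine Finset.sum_congr rfl fun j _ => Finset.sum_congr rfl fun t _ => ?_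
      by_cases h : t ∈ Ts j
      · have hdz : d i j t = 0 := by simp [hddef, heb j t (Or.inl h)]
        simp [hdz]
      · have hw1 : w j t = 1 := by simp [hwdef, h]
        simp [hw1]
    have h2 : (f b i : ℝ) + ∑ j, ∑ t, d i j t ≤ 1 := by
      rw [← hsum, ← hw]; exact (f w i).2.2
    simpa [Fin.sum_univ_succ, Fin.cons_zero, Fin.cons_succ] using h2
  · intro v hv i
    rw [key v hv i]
    simp [coefApply, Fin.cons_zero, Fin.cons_succ]
end

section
/- Fix a refined type κ = (T₁,U₁) → ⋯ → (T_k,U_k) → (T,U) over S = {1,…,n}, and let 𝒥(κ) be the set of all J ⊆ {1,…,k} × S such that (j,t) ∉ J whenever t ∈ T_j and (j,t) ∈ J whenever t ∈ U_j. Then for all coefficient tuples c, c' ∈ M⟦κ⟧, one has ⟨c⟩ ≾_κ ⟨c'⟩ (i.e. ⟨c⟩(v₁,…,v_k) ≤ ⟨c'⟩(v₁,…,v_k) pointwise for all (v₁,…,v_k) ∈ D(T₁,U₁)×⋯×D(T_k,U_k)) if and only if for every i ∈ S and every J ∈ 𝒥(κ), c_{i,0,0} + Σ_{(j,t)∈J}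 c_{i,j,t} ≤ c'_{i,0,0} + Σ_{(j,t)∈J} c'_{i,j,t}. -/
open Finset

/-- for coefficient tuples `c, c' ∈ M⟦κ⟧`, `⟨c⟩ ≾_κ ⟨c'⟩`
(pointwise on `D(T₁,U₁) × ⋯ × D(T_k,U_k)`) if and only if for every `i ∈ S`
and every `J ∈ 𝒥(κ)` (i.e. every `J ⊆ {1,…,k} × S` avoiding all `(j,t)` with
`t ∈ T_j` and containing all `(j,t)` with `t ∈ U_j`),
`c_{i,0,0} + Σ_{(j,t)∈J} c_{i,j,t} ≤ c'_{i,0,0} + Σ_{(j,t)∈J} c'_{i,j,t}`. -/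
theorem coef_precsim_iff_corner_ineqs {n k : ℕ} (hn : 1 ≤ n)
    (Ts Us : Fin k → Set (Fin n)) (T U : Set (Fin n))
    (hdisj : ∀ j, Disjoint (Ts j) (Us j)) (hTU : Disjoint T U)
    (c c' : Fin n → Fin (k + 1) → Fin (n + 1) → ℝ)
    (hc : InMKappa c) (hc' : InMKappa c') :
    (∀ v, InDom Ts Us v → ∀ i, coefApply c v i ≤ coefApply c' v i)
      ↔ ∀ (i : Fin n) (J : Finset (Fin k × Fin n)),
          (∀ j t, t ∈ Ts j → (j, t) ∉ J) → (∀ j t, t ∈ Us j → (j, t) ∈ J) →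
          c i 0 0 + ∑ p ∈ J, c i p.1.succ p.2.succ
            ≤ c' i 0 0 + ∑ p ∈ J, c' i p.1.succ p.2.succ := by
  classical
  constructor
  · intro h i J hJT hJU
    set v : Fin k → Fin n → unitInterval := fun j t => if (j, t) ∈ J then 1 else 0 with hv
    have hdom : InDom Ts Us v := by
      intro j
      refine ⟨fun s hs => ?_, fun s hs => ?_⟩
      · simp [hv, hJT j s hs]
      · simp [hv, hJU j s hs]
    have hkey : ∀ (d : Fin n → Fin (k+1) → Fin (n+1) → ℝ),
        (∑ j : Fin k, ∑ t : Fin n, d i j.succ t.succ * (v j t : ℝ))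
          = ∑ p ∈ J, d i p.1.succ p.2.succ := by
      intro d
      rw [← Finset.sum_product']
      have : ∀ p : Fin k × Fin n,
          d i p.1.succ p.2.succ * (v p.1 p.2 : ℝ)
            = if p ∈ J then d i p.1.succ p.2.succ else 0 := by
        intro p
        by_cases hp : p ∈ J <;> simp [hv, hp]
      rw [Finset.sum_congr rfl fun p _ => this p, Finset.sum_ite_mem]
      congr 1
      simp [Finset.inter_eq_right]
    have := h v hdom i
    simpa [coefApply, hkey c, hkey c'] using this
  · intro h v hdom i
    set b : Fin k → Fin n → ℝ := fun j t => c' i j.succ t.succ - c i j.succ t.succ with hb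
    set J : Finset (Fin k × Fin n) :=
      Finset.univ.filter (fun p => (b p.1 p.2 < 0 ∧ p.2 ∉ Ts p.1) ∨ p.2 ∈ Us p.1) with hJ
    have hJT : ∀ j t, t ∈ Ts j → (j, t) ∉ J := by
      intro j t ht hmem
      rw [hJ, Finset.mem_filter] at hmem
      rcases hmem.2 with ⟨_, h2⟩ | h2
      · exact h2 ht
      · exact (hdisj j).ne_of_mem ht h2 rfl
    have hJU : ∀ j t, t ∈ Us j → (j, t) ∈ J := by
      intro j t ht
      rw [hJ, Finset.mem_filter]
      exact ⟨Finset.mem_univ _, Or.inr ht⟩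
    have hcorner := h i J hJT hJU
    have hterm : ∀ p : Fin k × Fin n,
        (if p ∈ J then b p.1 p.2 else 0) ≤ b p.1 p.2 * (v p.1 p.2 : ℝ) := by
      intro p
      by_cases hp : p ∈ J
      · rw [if_pos hp]
        rw [hJ, Finset.mem_filter] at hp
        rcases hp.2 with ⟨hbneg, _⟩ | hUs
        · nlinarith [(v p.1 p.2).2.2]
        · have : v p.1 p.2 = 1 := ((hdom p.1).2 p.2 hUs)
          simp [this]
      · rw [if_neg hp]
        rw [hJ, Finset.mem_filter] at hp
        push_neg at hp
        obtain ⟨h1, h2⟩ := hp (Finset.mem_univ _)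
        by_cases hTs : p.2 ∈ Ts p.1
        · have : v p.1 p.2 = 0 := ((hdom p.1).1 p.2 hTs)
          simp [this]
        · have hb0 : 0 ≤ b p.1 p.2 := le_of_not_gt (fun hlt => hTs (h1 hlt))
          exact mul_nonneg hb0 (v p.1 p.2).2.1
    have hsum : ∑ p ∈ J, b p.1 p.2 ≤ ∑ j : Fin k, ∑ t : Fin n, b j t * (v j t : ℝ) := by
      rw [← Finset.sum_product']
      calc ∑ p ∈ J, b p.1 p.2
          = ∑ p : Fin k × Fin n, (if p ∈ J then b p.1 p.2 else 0) := by
            rw [Finset.sum_ite_mem]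
            congr 1
            simp [Finset.inter_eq_right]
        _ ≤ ∑ p : Fin k × Fin n, b p.1 p.2 * (v p.1 p.2 : ℝ) :=
            Finset.sum_le_sum fun p _ => hterm p
    have hsplit : ∀ (j : Fin k) (t : Fin n),
        b j t * (v j t : ℝ) = c' i j.succ t.succ * (v j t : ℝ) - c i j.succ t.succ * (v j t : ℝ) := by
      intro j t; rw [hb]; ring
    simp only [coefApply]
    have hJsum : ∑ p ∈ J, b p.1 p.2
        = ∑ p ∈ J, c' i p.1.succ p.2.succ - ∑ p ∈ J, c i p.1.succ p.2.succ := by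
      rw [← Finset.sum_sub_distrib]
    simp only [hsplit, Finset.sum_sub_distrib] at hsum
    linarith
end

section
/- Fix a refined type κ = (T₁,U₁) → ⋯ → (T_k,U_k) → (T,U) over S = {1,…,n}. Call a coefficient tuple c ∈ M⟦κ⟧ canonical if c_{i,j,0} = 0 for all j ≥ 1, c_{i,0,t} = 0 for all t ∈ S, and c_{i,j,t} = 0 whenever t ∈ T_j ∪ U_j. If c and c' are both canonical tuples in M⟦κ⟧ and ⟨c⟩ ∼_κ ⟨c'⟩, i.e. ⟨c⟩ and ⟨c'⟩ agree on D(T₁,U₁)×⋯×D(T_k,U_k), then c = c'. -/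
open Finset

/-- A coefficient tuple `c ∈ M⟦κ⟧` is canonical if `c_{i,j,0} = 0` for all
`j ≥ 1`, `c_{i,0,t} = 0` for all `t ∈ S`, and `c_{i,j,t} = 0` whenever
`t ∈ T_j ∪ U_j`. -/
def IsCanonical {n k : ℕ} (Ts Us : Fin k → Set (Fin n))
    (c : Fin n → Fin (k + 1) → Fin (n + 1) → ℝ) : Prop :=
  (∀ (i : Fin n) (j : Fin k), c i j.succ 0 = 0) ∧
  (∀ (i : Fin n) (t : Fin n), c i 0 t.succ = 0) ∧
  (∀ (i : Fin n) (j : Fin k) (t : Fin n), t ∈ Ts j ∪ Us j → c i j.succ t.succ = 0)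

/-- if `c` and `c'` are both canonical coefficient tuples in
`M⟦κ⟧` and the associated functions `⟨c⟩` and `⟨c'⟩` agree on
`D(T₁,U₁) × ⋯ × D(T_k,U_k)` (i.e. `⟨c⟩ ∼_κ ⟨c'⟩`), then `c = c'`. -/
theorem canonical_representation_unique {n k : ℕ} (hn : 1 ≤ n)
    (Ts Us : Fin k → Set (Fin n)) (T U : Set (Fin n))
    (hdisj : ∀ j, Disjoint (Ts j) (Us j)) (hTU : Disjoint T U)
    (c c' : Fin n → Fin (k + 1) → Fin (n + 1) → ℝ)
    (hc : InMKappa c) (hc' : InMKappa c')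
    (hcan : IsCanonical Ts Us c) (hcan' : IsCanonical Ts Us c')
    (heq : ∀ v, InDom Ts Us v → ∀ i, coefApply c v i = coefApply c' v i) :
    c = c' := by
  classical
  -- base point: 1 on Us j, 0 elsewhere
  set v0 : Fin k → Fin n → unitInterval :=
    fun j t => if t ∈ Us j then 1 else 0 with hv0def
  have hdom0 : InDom Ts Us v0 := by
    intro j
    refine ⟨fun s hs => ?_, fun s hs => ?_⟩
    · have : s ∉ Us j := Set.disjoint_left.mp (hdisj j) hs
      simp [v0, this]
    · simp [v0, hs]
  have sum0 : ∀ (d : Fin n → Fin (k + 1) → Fin (n + 1) → ℝ),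
      IsCanonical Ts Us d → ∀ i,
      ∑ j : Fin k, ∑ t : Fin n, d i j.succ t.succ * (v0 j t : ℝ) = 0 := by
    intro d hd i
    refine Finset.sum_eq_zero fun j _ => Finset.sum_eq_zero fun t _ => ?_
    by_cases ht : t ∈ Us j
    · rw [hd.2.2 i j t (Or.inr ht)]; ring
    · simp [v0, ht]
  have h00 : ∀ i, c i 0 0 = c' i 0 0 := by
    intro i
    have := heq v0 hdom0 i
    simpa [coefApply, sum0 c hcan i, sum0 c' hcan' i] using this
  -- for each (j0, t0) with t0 ∉ Ts j0 ∪ Us j0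
  have hmain : ∀ (j0 : Fin k) (t0 : Fin n), t0 ∉ Ts j0 ∪ Us j0 →
      ∀ i, c i j0.succ t0.succ = c' i j0.succ t0.succ := by
    intro j0 t0 ht0 i
    set v1 : Fin k → Fin n → unitInterval :=
      fun j t => if j = j0 ∧ t = t0 then 1 else v0 j t with hv1def
    have hdom1 : InDom Ts Us v1 := by
      intro j
      refine ⟨fun s hs => ?_, fun s hs => ?_⟩
      · by_cases h : j = j0 ∧ s = t0
        · exact absurd (h.1 ▸ h.2 ▸ hs) (fun hh => ht0 (Or.inl hh))
        · have : s ∉ Us j := Set.disjoint_left.mp (hdisj j) hs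
          simp [v1, h, v0, this]
      · by_cases h : j = j0 ∧ s = t0
        · exact absurd (h.1 ▸ h.2 ▸ hs) (fun hh => ht0 (Or.inr hh))
        · simp [v1, h, v0, hs]
    have sum1 : ∀ (d : Fin n → Fin (k + 1) → Fin (n + 1) → ℝ),
        IsCanonical Ts Us d →
        ∑ j : Fin k, ∑ t : Fin n, d i j.succ t.succ * (v1 j t : ℝ)
          = d i j0.succ t0.succ := by
      intro d hd
      rw [Finset.sum_eq_single_of_mem j0 (Finset.mem_univ j0)]
      · rw [Finset.sum_eq_single_of_mem t0 (Finset.mem_univ t0)]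
        · simp [v1]
        · intro t _ ht
          by_cases htU : t ∈ Us j0
          · rw [hd.2.2 i j0 t (Or.inr htU)]; ring
          · simp [v1, ht, v0, htU]
      · intro j _ hj
        refine Finset.sum_eq_zero fun t _ => ?_
        by_cases htU : t ∈ Us j
        · rw [hd.2.2 i j t (Or.inr htU)]; ring
        · simp [v1, hj, v0, htU]
    have := heq v1 hdom1 i
    rw [coefApply, coefApply, sum1 c hcan, sum1 c' hcan', h00 i] at this
    linarith
  funext i j t
  refine Fin.cases ?_ (fun j' => ?_) j
  · refine Fin.cases ?_ (fun t' => ?_) t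
    · exact h00 i
    · rw [hcan.2.1 i t', hcan'.2.1 i t']
  · refine Fin.cases ?_ (fun t' => ?_) t
    · rw [hcan.1 i j', hcan'.1 i j']
    · by_cases ht : t' ∈ Ts j' ∪ Us j'
      · rw [hcan.2.2 i j' t' ht, hcan'.2.2 i j' t' ht]
      · exact hmain j' t' ht i
end

section
/- Let M be the Markov chain on states {s₀, s₀', s₁, s₁'} with transition probabilities P(s₀,s₀') = P(s₀,s₁) = 1/2, P(s₀',s₀) = P(s₀',s₁') = 1/2, P(s₁,s₀) = 1, P(s₁',s₀') = 1, and 0 otherwise, and let Av(v)(s) := Σ_{s'} P(s,s')·v(s') for v : {s₀,s₀',s₁,s₁'} → [0,1]. For every n ∈ ℕ and every v : {s₀,s₀',s₁,s₁'} → [0,1] with v(s₀) = 2^{-n} and v(s₀') = 1 − 2^{-n}, the vector w := Av( max( min(Av(v), χ_{{s₁,s₁'}}), χ_{{s₀}} ) ) (min and max taken pointwise, χ denoting 0–1 indicator functions) satisfies w(s₀) = 2^{-(n+1)} and w(s₀') = 1 − 2^{-(n+1)}. -/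
open Finset

/-- The transition matrix of the Markov chain used for encoding the
`μ`-arithmetic: states `0 = s₀`, `1 = s₀'`, `2 = s₁`, `3 = s₁'`. -/
noncomputable def Pmc : Fin 4 → Fin 4 → ℝ :=
  ![![0, 1/2, 1/2, 0], ![1/2, 0, 0, 1/2], ![1, 0, 0, 0], ![0, 1, 0, 0]]

/-- The averaging (one-step expectation) operator of the Markov chain:
`Av(v)(s) = Σ_{s'} P(s,s')·v(s')`. -/
noncomputable def Avg (v : Fin 4 → ℝ) (s : Fin 4) : ℝ :=
  ∑ s', Pmc s s' * v s'

/-- if `v : {s₀,s₀',s₁,s₁'} → [0,1]` satisfies `v(s₀) = 2⁻ⁿ` and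
`v(s₀') = 1 − 2⁻ⁿ`, then the vector
`w = Av(max(min(Av(v), χ_{{s₁,s₁'}}), χ_{{s₀}}))` satisfies
`w(s₀) = 2^{-(n+1)}` and `w(s₀') = 1 − 2^{-(n+1)}`. -/
theorem successor_encoding (n : ℕ) (v : Fin 4 → ℝ)
    (hv : ∀ q, v q ∈ Set.Icc (0 : ℝ) 1)
    (hv0 : v 0 = (2 : ℝ)⁻¹ ^ n) (hv1 : v 1 = 1 - (2 : ℝ)⁻¹ ^ n) :
    (Avg (fun q => max (min (Avg v q) (if q = 2 ∨ q = 3 then 1 else 0))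
        (if q = 0 then 1 else 0)) 0 = (2 : ℝ)⁻¹ ^ (n + 1))
    ∧ (Avg (fun q => max (min (Avg v q) (if q = 2 ∨ q = 3 then 1 else 0))
        (if q = 0 then 1 else 0)) 1 = 1 - (2 : ℝ)⁻¹ ^ (n + 1)) := by
  have h0 := hv 0; have h1 := hv 1; have h2 := hv 2; have h3 := hv 3
  simp only [Set.mem_Icc] at h0 h1 h2 h3
  have hp0 : (0:ℝ) ≤ (2:ℝ)⁻¹ ^ n := by positivity
  have hp1 : (2:ℝ)⁻¹ ^ n ≤ 1 := pow_le_one₀ (by norm_num) (by norm_num)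
  set F : Fin 4 → ℝ := fun q => max (min (Avg v q) (if q = 2 ∨ q = 3 then 1 else 0))
        (if q = 0 then 1 else 0) with hF
  have hA2 : Avg v 2 = v 0 := by simp [Avg, Pmc, Fin.sum_univ_four]
  have hA3 : Avg v 3 = v 1 := by simp [Avg, Pmc, Fin.sum_univ_four]
  have hA1 : (0:ℝ) ≤ Avg v 1 := by
    simp [Avg, Pmc, Fin.sum_univ_four]; linarith [h0.1, h3.1]
  have hF0 : F 0 = 1 := by
    simp only [hF]
    rw [if_pos trivial, if_neg (by decide)]
    exact max_eq_right (le_trans (min_le_right _ _) zero_le_one)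
  have hF1 : F 1 = 0 := by
    simp only [hF]
    rw [if_neg (by decide), if_neg (by decide), min_comm, min_eq_left hA1, max_self]
  have hF2 : F 2 = (2:ℝ)⁻¹ ^ n := by
    simp only [hF]
    rw [if_pos (Or.inl trivial), if_neg (by decide), hA2, hv0, min_eq_left hp1, max_eq_left hp0]
  have hF3 : F 3 = 1 - (2:ℝ)⁻¹ ^ n := by
    simp only [hF]
    rw [if_pos (Or.inr trivial), if_neg (by decide), hA3, hv1, min_eq_left (by linarith),
      max_eq_left (by linarith)]
  constructor
  · show Avg F 0 = _
    simp only [Avg, Pmc, Fin.sum_univ_four, hF1, hF2, Matrix.cons_val_zero, Matrix.cons_val_one,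
      Matrix.head_cons, Matrix.cons_val_two, Matrix.tail_cons, Matrix.cons_val_three]
    rw [pow_succ]; ring
  · show Avg F 1 = _
    simp only [Avg, Pmc, Fin.sum_univ_four, hF0, hF3, Matrix.cons_val_zero, Matrix.cons_val_one,
      Matrix.head_cons, Matrix.cons_val_two, Matrix.tail_cons, Matrix.cons_val_three]
    rw [pow_succ]; ring
end

section
/- Let M be the Markov chain on states {s₀, s₀', s₁, s₁'} with transition probabilities P(s₀,s₀') = P(s₀,s₁) = 1/2, P(s₀',s₀) = P(s₀',s₁') = 1/2, P(s₁,s₀) = 1, P(s₁',s₀') = 1, and 0 otherwise, and let Av(v)(s) := Σ_{s'} P(s,s')·v(s'). For all n, m ∈ ℕ and all v, u : {s₀,s₀',s₁,s₁'} → [0,1] with v(s₀) = 2^{-n} and u(s₀') = 1 − 2^{-m}, one has Av( max( min(Av(v), χ_{{s₁}}), min(u, χ_{{s₀'}}) ) )(s₀) ≥ 1/2 if and only if n ≤ m (min and max taken pointwise, χ denoting 0–1 indicator functions). -/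
open Finset

/-- if `v, u : {s₀,s₀',s₁,s₁'} → [0,1]` satisfy `v(s₀) = 2⁻ⁿ`
and `u(s₀') = 1 − 2⁻ᵐ`, then
`Av(max(min(Av(v), χ_{{s₁}}), min(u, χ_{{s₀'}})))(s₀) ≥ 1/2` iff `n ≤ m`. -/
theorem comparison_encoding (n m : ℕ) (v u : Fin 4 → ℝ)
    (hv : ∀ q, v q ∈ Set.Icc (0 : ℝ) 1) (hu : ∀ q, u q ∈ Set.Icc (0 : ℝ) 1)
    (hv0 : v 0 = (2 : ℝ)⁻¹ ^ n) (hu1 : u 1 = 1 - (2 : ℝ)⁻¹ ^ m) :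
    (1 / 2 : ℝ) ≤
        Avg (fun q => max (min (Avg v q) (if q = 2 then 1 else 0))
          (min (u q) (if q = 1 then 1 else 0))) 0
      ↔ n ≤ m := by
  have hv0' := hv 0
  have hv3 := hv 3
  have hu1' := hu 1
  have hu2 := hu 2
  have key : Avg (fun q => max (min (Avg v q) (if q = 2 then 1 else 0))
      (min (u q) (if q = 1 then 1 else 0))) 0 = (u 1 + v 0) / 2 := by
    simp only [Avg, Pmc, Fin.sum_univ_four, Matrix.cons_val', Matrix.cons_val_zero,
      Matrix.cons_val_one, Matrix.head_cons, Matrix.cons_val_two, Matrix.tail_cons,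
      Matrix.cons_val_three, Matrix.head_fin_const, Matrix.empty_val', Matrix.cons_val_fin_one,
      Matrix.head_cons]
    norm_num
    have e1 : min ((v 0 + v 3)/2) 0 = 0 :=
      min_eq_right (by nlinarith [hv0'.1, hv3.1])
    have e2 : min (u 1) 1 = u 1 := min_eq_left hu1'.2
    have e3 : min (v 0) 1 = v 0 := min_eq_left hv0'.2
    have e4 : min (u 2) 0 = 0 := min_eq_right hu2.1
    rw [if_neg (by decide : ¬(1:Fin 4)=2), if_neg (by decide : ¬(2:Fin 4)=1),
      show 1/2 * v 0 + 1/2 * v 3 = (v 0 + v 3)/2 by ring, e1, e2, e3, e4,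
      max_eq_right hu1'.1, max_eq_left hv0'.1]
    ring
  rw [key, hu1, hv0]
  have hsa := pow_right_strictAnti₀ (a := (2:ℝ)⁻¹) (by norm_num) (by norm_num)
  constructor
  · intro h
    exact hsa.le_iff_ge.mp (by linarith)
  · intro h
    have := hsa.le_iff_ge.mpr h
    linarith
end
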